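/- arXiv:1212.6848 — 4 statements merged into one kernel-verified Lean document; each statement's English description precedes it below -/
import Mathlib

section
/- Let G be a connected signed graph, v a vertex of G, and C the vertex set of a connected component of G−v such that G[C] is a clique containing no positive triangle. Suppose there exist distinct a, b ∈ C such that G−{a,b} is connected and v, a, b form a positive triangle (all three edges va, ab, bv exist and carry an even number of negative signs). Then β(G) − pt(G) ≥ β(G−{a,b}) − pt(G−{a,b}) + 1. -/
/-- Sign convention: `true` = positive edge, `false` = negative edge.
An edge `e` is *consistent* with the partition `(A, Aᶜ)` of the vertex set if it is
positive when both endpoints lie on the same side and negative otherwise. -/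
def SignConsistent {V : Type*} (sign : Sym2 V → Bool) (A : Set V) (e : Sym2 V) : Prop :=
  ∀ u v : V, e = s(u, v) → (sign e = true ↔ (u ∈ A ↔ v ∈ A))

/-- The number of edges of the balanced subgraph induced by the partition `(A, Aᶜ)`. -/
noncomputable def balCount {V : Type*} (G : SimpleGraph V) (sign : Sym2 V → Bool)
    (A : Set V) : ℕ :=
  {e | e ∈ G.edgeSet ∧ SignConsistent sign A e}.ncard

/-- `beta G sign` = β(G): the maximum number of edges of a balanced subgraph of the
signed graph `(G, sign)`. -/
noncomputable def beta {V : Type*} (G : SimpleGraph V) (sign : Sym2 V → Bool) : ℕ :=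
  sSup {n | ∃ A : Set V, n = balCount G sign A}

/-- The Poljak–Turzík bound `pt G = m/2 + (n − t)/4`, where `m` is the number of edges,
`n` the number of vertices and `t` the number of connected components. -/
noncomputable def pt {V : Type*} (G : SimpleGraph V) : ℚ :=
  (G.edgeSet.ncard : ℚ) / 2 +
    ((Nat.card V : ℚ) - (Nat.card G.ConnectedComponent : ℚ)) / 4

/-- β of the signed subgraph induced on the vertex set `U`. -/
noncomputable def betaOn {V : Type*} (G : SimpleGraph V) (sign : Sym2 V → Bool)
    (U : Set V) : ℕ :=
  beta (G.induce U) (fun e => sign (Sym2.map Subtype.val e))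

/-- `pt` of the subgraph induced on the vertex set `U`. -/
noncomputable def ptOn {V : Type*} (G : SimpleGraph V) (U : Set V) : ℚ :=
  pt (G.induce U)

/-- The signed graph `(G, sign)` is balanced: some partition `(A, Aᶜ)` is consistent
with every edge. -/
def IsBalanced {V : Type*} (G : SimpleGraph V) (sign : Sym2 V → Bool) : Prop :=
  ∃ A : Set V, ∀ u v : V, G.Adj u v → (sign s(u, v) = true ↔ (u ∈ A ↔ v ∈ A))

/-- `a`, `b`, `c` form a positive triangle: all three edges exist and the number of
negative edges among them is even. -/
def PositiveTriangle {V : Type*} (G : SimpleGraph V) (sign : Sym2 V → Bool)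
    (a b c : V) : Prop :=
  G.Adj a b ∧ G.Adj b c ∧ G.Adj c a ∧
    Even ((if sign s(a, b) then 0 else 1) + (if sign s(b, c) then 0 else 1) +
      (if sign s(c, a) then 0 else 1))

/-- `X` is (the vertex set of) a connected component of `G − S`. -/
def IsCompOf {V : Type*} (G : SimpleGraph V) (S X : Set V) : Prop :=
  Disjoint X S ∧ (G.induce X).Connected ∧
    ∀ x ∈ X, ∀ y : V, G.Adj x y → y ∉ S → y ∈ X

/-- The neighborhood of a vertex set `X`. -/
def nbhd {V : Type*} (G : SimpleGraph V) (X : Set V) : Set V :=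
  {v | v ∉ X ∧ ∃ x ∈ X, G.Adj x v}

open Classical
set_option linter.unreachableTactic false
set_option linter.unusedTactic false

lemma even_iff_bool (x y z : Bool) :
    Even ((if x then 0 else 1) + (if y then 0 else 1) + (if z then 0 else 1) : ℕ) ↔
      (x = true ↔ (y = true ↔ z = true)) := by
  cases x <;> cases y <;> cases z <;> decide

lemma tri_choice (X Y Z : Bool) (pa pb pc : Prop)
    (hodd : ¬ (X = true ↔ (Y = true ↔ Z = true)))
    (hab : X = true ↔ (pa ↔ pb)) :
    (Y = true ↔ (pb ↔ pc)) ∨ (Z = true ↔ (pc ↔ pa)) := by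
  cases X <;> cases Y <;> cases Z <;> simp_all <;> tauto

lemma card_cc_eq_one {V : Type*} {G : SimpleGraph V} (h : G.Connected) :
    Nat.card G.ConnectedComponent = 1 := by
  have hne : Nonempty V := h.nonempty
  have : Subsingleton G.ConnectedComponent := by
    constructor
    intro c d
    refine SimpleGraph.ConnectedComponent.ind₂ (fun u w => ?_) c d
    exact SimpleGraph.ConnectedComponent.eq.mpr (h.preconnected u w)
  rw [Nat.card_eq_one_iff_unique]
  exact ⟨this, ⟨G.connectedComponentMk hne.some⟩⟩

lemma iff_self_aux (P Q : Prop) : P ↔ (Q ↔ (P ↔ Q)) := by tauto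

lemma cons_ab_aux (P Q R M : Prop) (h : P ↔ (Q ↔ R)) : Q ↔ ((P ↔ M) ↔ (R ↔ M)) := by tauto

lemma signConsistent_pair_iff {V : Type*} (sign : Sym2 V → Bool) (A : Set V) (x y : V) :
    SignConsistent sign A s(x, y) ↔ (sign s(x, y) = true ↔ (x ∈ A ↔ y ∈ A)) := by
  constructor
  · intro h; exact h x y rfl
  · intro h u w he
    rcases Sym2.eq_iff.mp he.symm with ⟨rfl, rfl⟩ | ⟨rfl, rfl⟩
    · exact h
    · rw [Sym2.eq_swap] at h ⊢
      exact h.trans (iff_comm)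

/-- safety of Rule 4. Let `G` be a connected signed graph, `v` a
vertex, and `C` the vertex set of a connected component of `G − v` such that `G[C]`
is a clique containing no positive triangle. If `a, b ∈ C` are distinct, `G − {a,b}`
is connected, and `v, a, b` form a positive triangle, then
`β(G) − pt(G) ≥ β(G − {a,b}) − pt(G − {a,b}) + 1`. -/
theorem stmt12 {V : Type*} [Fintype V] (G : SimpleGraph V) (sign : Sym2 V → Bool)
    (hconn : G.Connected) (v : V) (C : Set V) (hC : IsCompOf G {v} C)
    (hclique : G.IsClique C)
    (htri : ¬ ∃ x y z : V, x ∈ C ∧ y ∈ C ∧ z ∈ C ∧ PositiveTriangle G sign x y z)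
    (a b : V) (ha : a ∈ C) (hb : b ∈ C) (hab : a ≠ b)
    (hrest : (G.induce ({a, b}ᶜ : Set V)).Connected)
    (hvab : PositiveTriangle G sign v a b) :
    (beta G sign : ℚ) - pt G ≥
      (betaOn G sign ({a, b}ᶜ : Set V) : ℚ) - ptOn G ({a, b}ᶜ : Set V) + 1 := by
  classical
  set U : Set V := ({a, b}ᶜ : Set V) with hU
  set G' : SimpleGraph ↥U := G.induce U with hG'
  set sign' : Sym2 ↥U → Bool := fun e => sign (Sym2.map Subtype.val e) with hsign'
  -- basic adjacency facts
  obtain ⟨hva, hab', hbv, heven⟩ := hvab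
  have hvC : v ∉ C := fun h => (Set.disjoint_left.mp hC.1 h) rfl
  have hvna : v ≠ a := fun h => hvC (h ▸ ha)
  have hvnb : v ≠ b := fun h => hvC (h ▸ hb)
  have hvU : v ∈ U := by simp [hU, hvna, hvnb]
  have haU : a ∉ U := by simp [hU]
  have hbU : b ∉ U := by simp [hU]
  have hcD : ∀ c ∈ C \ {a, b}, c ≠ a ∧ c ≠ b ∧ c ≠ v ∧ c ∈ U ∧ c ∈ C := by
    intro c hc
    have h1 : c ≠ a := fun h => hc.2 (by simp [h])
    have h2 : c ≠ b := fun h => hc.2 (by simp [h])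
    have h3 : c ≠ v := fun h => hvC (h ▸ hc.1)
    exact ⟨h1, h2, h3, by simp [hU, h1, h2], hc.1⟩
  -- neighborhoods of a and b
  have hNa : ∀ y, G.Adj a y → y = v ∨ y ∈ C := by
    intro y hy
    by_cases h : y = v
    · exact Or.inl h
    · exact Or.inr (hC.2.2 a ha y hy (by simpa using h))
  have hNb : ∀ y, G.Adj b y → y = v ∨ y ∈ C := by
    intro y hy
    by_cases h : y = v
    · exact Or.inl h
    · exact Or.inr (hC.2.2 b hb y hy (by simpa using h))
  set D : Set V := C \ {a, b} with hD
  set k : ℕ := D.ncard with hk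
  -- the map on edges
  set φ : Sym2 ↥U → Sym2 V := Sym2.map (Subtype.val : ↥U → V) with hφ
  have hφinj : Function.Injective φ := Sym2.map.injective Subtype.val_injective
  have hφab : ∀ e : Sym2 ↥U, a ∉ φ e ∧ b ∉ φ e := by
    intro e
    constructor <;>
    · intro h
      rw [hφ, Sym2.mem_map] at h
      obtain ⟨x, _, hx⟩ := h
      first
        | exact haU (hx ▸ x.2)
        | exact hbU (hx ▸ x.2)
  -- edge sets decomposition
  set T0 : Set (Sym2 V) := {s(v, a), s(v, b), s(a, b)} with hT0
  set T1 : Set (Sym2 V) := (fun c => s(a, c)) '' D with hT1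
  set T2 : Set (Sym2 V) := (fun c => s(b, c)) '' D with hT2
  set T : Set (Sym2 V) := T0 ∪ T1 ∪ T2 with hT
  have hban : b ≠ a := hab.symm
  have hanv : a ≠ v := hvna.symm
  have hbnv : b ≠ v := hvnb.symm
  have hT0card : T0.ncard = 3 := by
    have h1 : s(v, a) ∉ ({s(v, b), s(a, b)} : Set (Sym2 V)) := by
      simp [Sym2.eq_iff, hab, hvnb, hvna, hanv]
    have h2 : s(v, b) ≠ s(a, b) := by
      simp [Sym2.eq_iff, hvna, hvnb]
    rw [hT0, Set.ncard_insert_of_notMem h1 (Set.toFinite _), Set.ncard_pair h2]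
  have hinj1 : Set.InjOn (fun c => s(a, c)) D := by
    intro c hc c' hc' h
    rcases Sym2.eq_iff.mp h with ⟨_, h2⟩ | ⟨h1, _⟩
    · exact h2
    · exact absurd h1.symm (hcD c' hc').1
  have hinj2 : Set.InjOn (fun c => s(b, c)) D := by
    intro c hc c' hc' h
    rcases Sym2.eq_iff.mp h with ⟨_, h2⟩ | ⟨h1, _⟩
    · exact h2
    · exact absurd h1.symm (hcD c' hc').2.1
  have hd01 : Disjoint T0 T1 := by
    rw [Set.disjoint_left]
    intro e he0 he1
    obtain ⟨c, hc, rfl⟩ := he1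
    obtain ⟨hca, hcb, hcv, _, _⟩ := hcD c hc
    rcases he0 with h | h | h <;> rcases Sym2.eq_iff.mp h with ⟨h1, h2⟩ | ⟨h1, h2⟩ <;>
      first
        | exact hanv h1 | exact hanv h1.symm | exact hcv h2 | exact hcv h2.symm
        | exact hca h1 | exact hca h1.symm | exact hcb h2 | exact hcb h2.symm
        | exact hca h2 | exact hca h2.symm | exact hcb h1 | exact hcb h1.symm
        | exact hban h1 | exact hban h1.symm | exact hab h1 | exact hab h1.symm
        | exact hcv h1 | exact hcv h1.symm | exact hbnv h1 | exact hbnv h1.symm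
        | exact hbnv h2 | exact hbnv h2.symm | exact hanv h2 | exact hanv h2.symm
  have hd02 : Disjoint T0 T2 := by
    rw [Set.disjoint_left]
    intro e he0 he2
    obtain ⟨c, hc, rfl⟩ := he2
    obtain ⟨hca, hcb, hcv, _, _⟩ := hcD c hc
    rcases he0 with h | h | h <;> rcases Sym2.eq_iff.mp h with ⟨h1, h2⟩ | ⟨h1, h2⟩ <;>
      first
        | exact hanv h1 | exact hanv h1.symm | exact hcv h2 | exact hcv h2.symm
        | exact hca h1 | exact hca h1.symm | exact hcb h2 | exact hcb h2.symm
        | exact hca h2 | exact hca h2.symm | exact hcb h1 | exact hcb h1.symm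
        | exact hban h1 | exact hban h1.symm | exact hab h1 | exact hab h1.symm
        | exact hcv h1 | exact hcv h1.symm | exact hbnv h1 | exact hbnv h1.symm
        | exact hbnv h2 | exact hbnv h2.symm | exact hanv h2 | exact hanv h2.symm
  have hd12 : Disjoint T1 T2 := by
    rw [Set.disjoint_left]
    intro e he1 he2
    obtain ⟨c, hc, rfl⟩ := he1
    obtain ⟨c', hc', h⟩ := he2
    obtain ⟨hca, hcb, hcv, _, _⟩ := hcD c hc
    obtain ⟨hca', hcb', hcv', _, _⟩ := hcD c' hc'
    rcases Sym2.eq_iff.mp h with ⟨h1, h2⟩ | ⟨h1, h2⟩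
    · exact hban h1
    · exact hca' h2
  have hTcard : T.ncard = 3 + k + k := by
    rw [hT, Set.ncard_union_eq (by rw [Set.disjoint_union_left]; exact ⟨hd02, hd12⟩)
      (Set.toFinite _) (Set.toFinite _),
      Set.ncard_union_eq hd01 (Set.toFinite _) (Set.toFinite _),
      hT0card, hT1, hT2, Set.ncard_image_of_injOn hinj1, Set.ncard_image_of_injOn hinj2, hk]
  have hTab : ∀ e ∈ T, a ∈ e ∨ b ∈ e := by
    intro e he
    rcases he with (he | he) | he
    · rcases he with h | h | h
      · rw [h]; left; simp
      · rw [h]; right; simp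
      · rw [h]; left; simp
    · obtain ⟨c, _, rfl⟩ := he
      left; simp
    · obtain ⟨c, _, rfl⟩ := he
      right; simp
  have hTedge : T ⊆ G.edgeSet := by
    intro e he
    rcases he with (he | he) | he
    · rcases he with h | h | h
      · rw [h]; exact hva
      · rw [h]; exact hbv.symm
      · rw [h]; exact hab'
    · obtain ⟨c, hc, rfl⟩ := he
      exact hclique ha (hcD c hc).2.2.2.2 ((hcD c hc).1.symm)
    · obtain ⟨c, hc, rfl⟩ := he
      exact hclique hb (hcD c hc).2.2.2.2 ((hcD c hc).2.1.symm)
  have hTa : ∀ y, G.Adj a y → s(a, y) ∈ T := by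
    intro y hy
    rcases hNa y hy with rfl | hyC
    · exact Or.inl (Or.inl (by rw [Sym2.eq_swap]; simp [hT0]))
    · by_cases hyb : y = b
      · exact Or.inl (Or.inl (by rw [hyb]; simp [hT0]))
      · refine Or.inl (Or.inr ⟨y, ?_, rfl⟩)
        rw [hD]
        exact ⟨hyC, by simp [hy.ne', hyb]⟩
  have hTb : ∀ y, G.Adj b y → s(b, y) ∈ T := by
    intro y hy
    rcases hNb y hy with rfl | hyC
    · exact Or.inl (Or.inl (by rw [Sym2.eq_swap]; simp [hT0]))
    · by_cases hya : y = a
      · exact Or.inl (Or.inl (by rw [hya, Sym2.eq_swap]; simp [hT0]))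
      · refine Or.inr ⟨y, ?_, rfl⟩
        rw [hD]
        exact ⟨hyC, by simp [hya, hy.ne']⟩
  have hWT : G.edgeSet = φ '' G'.edgeSet ∪ T := by
    apply Set.eq_of_subset_of_subset
    · intro e he
      induction e with
      | _ x y =>
        rw [SimpleGraph.mem_edgeSet] at he
        by_cases hxa : x = a
        · subst hxa; exact Or.inr (hTa y he)
        · by_cases hxb : x = b
          · subst hxb; exact Or.inr (hTb y he)
          · by_cases hya : y = a
            · subst hya
              have := hTa x he.symm
              rw [Sym2.eq_swap] at this
              exact Or.inr this
            · by_cases hyb : y = b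
              · subst hyb
                have := hTb x he.symm
                rw [Sym2.eq_swap] at this
                exact Or.inr this
              · left
                have hxU : x ∈ U := by simp [hU, hxa, hxb]
                have hyU : y ∈ U := by simp [hU, hya, hyb]
                refine ⟨s(⟨x, hxU⟩, ⟨y, hyU⟩), ?_, rfl⟩
                rw [SimpleGraph.mem_edgeSet]
                simpa [hG'] using he
    · intro e he
      rcases he with ⟨e', he', rfl⟩ | he
      · induction e' with
        | _ x y =>
          rw [SimpleGraph.mem_edgeSet] at he'
          rw [hφ, Sym2.map_pair_eq, SimpleGraph.mem_edgeSet]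
          simpa [hG'] using he'
      · exact hTedge he
  have hdisjWT : Disjoint (φ '' G'.edgeSet) T := by
    rw [Set.disjoint_left]
    rintro e ⟨e', _, rfl⟩ heT
    rcases hTab _ heT with h | h
    · exact (hφab e').1 h
    · exact (hφab e').2 h
  have hm : G.edgeSet.ncard = G'.edgeSet.ncard + (3 + k + k) := by
    rw [hWT, Set.ncard_union_eq hdisjWT (Set.toFinite _) (Set.toFinite _),
      Set.ncard_image_of_injective _ hφinj, hTcard]
  -- vertex count
  have hn : (Nat.card V : ℚ) = (Nat.card ↥U : ℚ) + 2 := by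
    have h1 : ({a, b} : Set V).ncard + U.ncard = Nat.card V :=
      Set.ncard_add_ncard_compl _
    have h2 : ({a, b} : Set V).ncard = 2 := Set.ncard_pair hab
    have h3 : Nat.card ↥U = U.ncard := Nat.card_coe_set_eq U
    rw [h3, ← h1, h2]
    push_cast
    ring
  -- component counts
  have ht1 : Nat.card G.ConnectedComponent = 1 := card_cc_eq_one hconn
  have ht2 : Nat.card G'.ConnectedComponent = 1 := card_cc_eq_one hrest
  -- beta inequality
  have hbeta : betaOn G sign U + (k + 3) ≤ beta G sign := by
    -- optimal partition for G'
    have hbddG : BddAbove {n | ∃ A : Set V, n = balCount G sign A} := by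
      refine ⟨G.edgeSet.ncard, ?_⟩
      rintro n ⟨A, rfl⟩
      exact Set.ncard_le_ncard (fun e he => he.1) (Set.toFinite _)
    have hbddG' : BddAbove {n | ∃ A : Set ↥U, n = balCount G' sign' A} := by
      refine ⟨G'.edgeSet.ncard, ?_⟩
      rintro n ⟨A, rfl⟩
      exact Set.ncard_le_ncard (fun e he => he.1) (Set.toFinite _)
    have hne' : {n | ∃ A : Set ↥U, n = balCount G' sign' A}.Nonempty := ⟨_, ∅, rfl⟩
    have hbOn : betaOn G sign U = beta G' sign' := rfl
    obtain ⟨A', hA'⟩ : ∃ A' : Set ↥U, beta G' sign' = balCount G' sign' A' :=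
      Nat.sSup_mem hne' hbddG'
    -- build the partition of G
    set A0 : Set V := Subtype.val '' A' with hA0
    set A : Set V := A0 ∪ {x | (x = a ∧ (sign s(v, a) = true ↔ v ∈ A0)) ∨
      (x = b ∧ (sign s(v, b) = true ↔ v ∈ A0))} with hAdef
    have hA0U : A0 ⊆ U := by rintro x ⟨u, _, rfl⟩; exact u.2
    have haA : a ∈ A ↔ (sign s(v, a) = true ↔ v ∈ A0) := by
      constructor
      · rintro (h | (⟨_, h⟩ | ⟨h, _⟩))
        · exact absurd (hA0U h) haU
        · exact h
        · exact absurd h hab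
      · intro h; right; left; exact ⟨rfl, h⟩
    have hbA : b ∈ A ↔ (sign s(v, b) = true ↔ v ∈ A0) := by
      constructor
      · rintro (h | (⟨h, _⟩ | ⟨_, h⟩))
        · exact absurd (hA0U h) hbU
        · exact absurd h hban
        · exact h
      · intro h; right; right; exact ⟨rfl, h⟩
    have huA : ∀ x ∈ U, (x ∈ A ↔ x ∈ A0) := by
      intro x hx
      constructor
      · rintro (h | (⟨rfl, _⟩ | ⟨rfl, _⟩))
        · exact h
        · exact absurd hx haU
        · exact absurd hx hbU
      · intro h; left; exact h
    have hconsVA : sign s(v, a) = true ↔ (v ∈ A ↔ a ∈ A) := by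
      rw [haA, huA v hvU]; exact iff_self_aux _ _
    have hconsVB : sign s(v, b) = true ↔ (v ∈ A ↔ b ∈ A) := by
      rw [hbA, huA v hvU]; exact iff_self_aux _ _
    have hpar : (sign s(v, a) = true) ↔ ((sign s(a, b) = true) ↔ (sign s(v, b) = true)) := by
      have h := (even_iff_bool _ _ _).mp heven
      have hsw : s(b, v) = s(v, b) := Sym2.eq_swap
      rw [hsw] at h
      exact h
    have hconsAB : sign s(a, b) = true ↔ (a ∈ A ↔ b ∈ A) := by
      rw [haA, hbA]; exact cons_ab_aux _ _ _ _ hpar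
    have hchoice : ∀ c ∈ D, (sign s(b, c) = true ↔ (b ∈ A ↔ c ∈ A)) ∨
        (sign s(c, a) = true ↔ (c ∈ A ↔ a ∈ A)) := by
      intro c hc
      obtain ⟨hca, hcb, hcv, hcU, hcC⟩ := hcD c hc
      have hodd : ¬ (sign s(a, b) = true ↔ (sign s(b, c) = true ↔ sign s(c, a) = true)) := by
        intro h
        exact htri ⟨a, b, c, ha, hb, hcC,
          hab', hclique hb hcC hcb.symm, hclique hcC ha hca, (even_iff_bool _ _ _).mpr h⟩
      exact tri_choice _ _ _ _ _ _ hodd hconsAB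
    set f : V → Sym2 V := fun c =>
      if (sign s(b, c) = true ↔ (b ∈ A ↔ c ∈ A)) then s(b, c) else s(a, c) with hf
    set E : Set (Sym2 V) := {e | e ∈ G.edgeSet ∧ SignConsistent sign A e} with hE
    have hfc : ∀ c ∈ D, f c ∈ E ∧ f c ∈ T1 ∪ T2 := by
      intro c hc
      obtain ⟨hca, hcb, hcv, hcU, hcC⟩ := hcD c hc
      have hfcc : f c = if (sign s(b, c) = true ↔ (b ∈ A ↔ c ∈ A)) then s(b, c) else s(a, c) :=
        rfl
      rw [hfcc]
      by_cases h : (sign s(b, c) = true ↔ (b ∈ A ↔ c ∈ A))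
      · rw [if_pos h]
        refine ⟨⟨hclique hb hcC hcb.symm, (signConsistent_pair_iff _ _ _ _).mpr h⟩, ?_⟩
        right; exact ⟨c, hc, rfl⟩
      · rw [if_neg h]
        rcases hchoice c hc with h' | h'
        · exact absurd h' h
        · refine ⟨⟨hclique ha hcC hca.symm, (signConsistent_pair_iff _ _ _ _).mpr ?_⟩, ?_⟩
          · rw [Sym2.eq_swap]
            exact h'.trans iff_comm
          · left; exact ⟨c, hc, rfl⟩
    have hfinj : Set.InjOn f D := by
      intro c hc c' hc' h
      obtain ⟨hca, hcb, hcv, _, _⟩ := hcD c hc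
      obtain ⟨hca', hcb', hcv', _, _⟩ := hcD c' hc'
      have hc1 : f c = if (sign s(b, c) = true ↔ (b ∈ A ↔ c ∈ A)) then s(b, c) else s(a, c) :=
        rfl
      have hc2 : f c' = if (sign s(b, c') = true ↔ (b ∈ A ↔ c' ∈ A)) then s(b, c') else s(a, c') :=
        rfl
      rw [hc1, hc2] at h
      by_cases h1 : (sign s(b, c) = true ↔ (b ∈ A ↔ c ∈ A)) <;>
        by_cases h2 : (sign s(b, c') = true ↔ (b ∈ A ↔ c' ∈ A)) <;>
          [rw [if_pos h1, if_pos h2] at h; rw [if_pos h1, if_neg h2] at h;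
            rw [if_neg h1, if_pos h2] at h; rw [if_neg h1, if_neg h2] at h] <;>
        rcases Sym2.eq_iff.mp h with ⟨g1, g2⟩ | ⟨g1, g2⟩ <;>
        first
          | exact g2
          | exact absurd g1 hban
          | exact absurd g1.symm hban
          | exact absurd g2 hca
          | exact absurd g2 hcb
          | exact absurd g1.symm hca'
          | exact absurd g1.symm hcb'
          | exact absurd g2.symm hca'
          | exact absurd g2.symm hcb'
          | exact absurd g1 hab
          | exact absurd g1.symm hab
    set S : Set (Sym2 V) := T0 ∪ f '' D with hS
    have hfD12 : f '' D ⊆ T1 ∪ T2 := by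
      rintro e ⟨c, hc, rfl⟩
      exact (hfc c hc).2
    have hSsub : S ⊆ E := by
      intro e he
      rcases he with he | he
      · rcases he with h | h | h
        · rw [h]
          exact ⟨hva, (signConsistent_pair_iff _ _ _ _).mpr hconsVA⟩
        · rw [h]
          exact ⟨hbv.symm, (signConsistent_pair_iff _ _ _ _).mpr hconsVB⟩
        · rw [h]
          exact ⟨hab', (signConsistent_pair_iff _ _ _ _).mpr hconsAB⟩
      · obtain ⟨c, hc, rfl⟩ := he
        exact (hfc c hc).1
    have hScard : S.ncard = 3 + k := by
      have hdisj0 : Disjoint T0 (f '' D) :=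
        Set.disjoint_of_subset_right hfD12 (by rw [Set.disjoint_union_right]; exact ⟨hd01, hd02⟩)
      rw [hS, Set.ncard_union_eq hdisj0 (Set.toFinite _) (Set.toFinite _), hT0card,
        Set.ncard_image_of_injOn hfinj, hk]
    -- edges within U that are consistent
    set W' : Set (Sym2 V) := φ '' {e | e ∈ G'.edgeSet ∧ SignConsistent sign' A' e} with hW'
    have hWsub : W' ⊆ E := by
      intro e he
      obtain ⟨e', he', rfl⟩ := he
      induction e' with
      | _ x y =>
        obtain ⟨he1, he2⟩ := he'
        rw [SimpleGraph.mem_edgeSet] at he1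
        have hGadj : G.Adj ↑x ↑y := by simpa [hG'] using he1
        have hcons := (signConsistent_pair_iff _ _ _ _).mp he2
        have hsx : (↑x : V) ∈ A ↔ x ∈ A' := by
          rw [huA ↑x x.2, hA0]
          exact Subtype.val_injective.mem_set_image
        have hsy : (↑y : V) ∈ A ↔ y ∈ A' := by
          rw [huA ↑y y.2, hA0]
          exact Subtype.val_injective.mem_set_image
        have hsgn : sign' s(x, y) = sign s((↑x : V), ↑y) := rfl
        constructor
        · rw [hφ, Sym2.map_pair_eq, SimpleGraph.mem_edgeSet]
          exact hGadj
        · rw [hφ, Sym2.map_pair_eq]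
          refine (signConsistent_pair_iff _ _ _ _).mpr ?_
          rw [← hsgn, hsx, hsy]
          exact hcons
    have hWcard : W'.ncard = balCount G' sign' A' := by
      rw [hW', Set.ncard_image_of_injective _ hφinj]
      rfl
    have hdisjWS : Disjoint W' S := by
      rw [Set.disjoint_left]
      rintro e ⟨e', _, rfl⟩ heS
      have : a ∈ φ e' ∨ b ∈ φ e' := by
        have := hTab (φ e') ?_
        · exact this
        · rcases heS with h | h
          · exact Or.inl (Or.inl h)
          · rcases hfD12 h with h' | h'
            · exact Or.inl (Or.inr h')
            · exact Or.inr h'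
      rcases this with h | h
      · exact (hφab e').1 h
      · exact (hφab e').2 h
    have hkey : balCount G' sign' A' + (3 + k) ≤ balCount G sign A := by
      have hsub : W' ∪ S ⊆ E := Set.union_subset hWsub hSsub
      have h1 : (W' ∪ S).ncard = W'.ncard + S.ncard :=
        Set.ncard_union_eq hdisjWS (Set.toFinite _) (Set.toFinite _)
      have h2 : (W' ∪ S).ncard ≤ E.ncard := Set.ncard_le_ncard hsub (Set.toFinite _)
      calc balCount G' sign' A' + (3 + k) = W'.ncard + S.ncard := by rw [hWcard, hScard]
        _ = (W' ∪ S).ncard := h1.symm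
        _ ≤ E.ncard := h2
        _ = balCount G sign A := rfl
    have hle : balCount G sign A ≤ beta G sign := le_csSup hbddG ⟨A, rfl⟩
    rw [hbOn, hA']
    omega
  -- conclude
  have hptG : pt G = (G.edgeSet.ncard : ℚ) / 2 +
      ((Nat.card V : ℚ) - 1) / 4 := by rw [pt, ht1]; norm_num
  have hptG' : ptOn G U = (G'.edgeSet.ncard : ℚ) / 2 +
      ((Nat.card ↥U : ℚ) - 1) / 4 := by rw [ptOn, pt, ← hG', ht2]; norm_num
  have hbQ : (betaOn G sign U : ℚ) + (k + 3) ≤ (beta G sign : ℚ) := by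
    exact_mod_cast hbeta
  have hmQ : (G.edgeSet.ncard : ℚ) = (G'.edgeSet.ncard : ℚ) + (3 + k + k) := by
    exact_mod_cast hm
  rw [ge_iff_le, hptG, hptG', hn]
  linarith
end

section
/- Let G be a connected signed graph and v, b nonadjacent vertices such that G−{v,b} has exactly two connected components, with vertex sets C and Y, and such that both G[C∪{v}] and G[C∪{b}] are cliques containing no positive triangle. Then β(G) − pt(G) ≥ β(G[Y]) − pt(G[Y]) + 1/4. -/
/-!
Write `W = C ∪ {v, b} = Yᶜ` and `k = |C|`. As `C ∪ {v}` and `C ∪ {b}` are cliques without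
positive triangles and `vb` is not an edge, `G[W]` is antibalanced: with `g x` the sign of the
edge `cx` for a fixed `c ∈ C`, an edge `xy` of `G[W]` is positive iff `g x ≠ g y`. So for
`P ⊆ C` with `|P| = ⌊(k+2)/2⌋`, the partition `{x | g x ↔ x ∈ P}` makes all
`⌊(k+2)/2⌋⌈(k+2)/2⌉ ≥ ((k+2)² - 1)/4` edges between `P` and `W \ P` consistent. Extend it by
an optimal partition of `G[Y]`, once as it is and once with the side of `Y` flipped: every edge
between `Y` and `W` is consistent in exactly one of the two, so
`2β(G) ≥ 2β(G[Y]) + ((k+2)² - 1)/2 + e(Y, W)`. Since `G[W]` misses `vb`,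
`e(G[W]) ≤ (k+2)(k+1)/2 - 1`, and comparing with
`pt(G) = pt(G[Y]) + e(G[W])/2 + e(Y, W)/2 + (k+2)/4` leaves `1/4`.
-/

open Set
open scoped symmDiff

section SignedGraph

variable {V : Type*}

theorem signConsistent_mk_iff (sign : Sym2 V → Bool) (A : Set V) (u w : V) :
    SignConsistent sign A s(u, w) ↔ (sign s(u, w) = true ↔ (u ∈ A ↔ w ∈ A)) := by
  refine ⟨fun h => h u w rfl, fun h x y hxy => ?_⟩
  rcases Sym2.eq_iff.mp hxy with ⟨rfl, rfl⟩ | ⟨rfl, rfl⟩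
  · exact h
  · rw [h]; tauto

theorem signConsistent_congr {sign : Sym2 V → Bool} {A B : Set V} {e : Sym2 V}
    (h : ∀ x ∈ e, x ∈ A ↔ x ∈ B) : SignConsistent sign A e ↔ SignConsistent sign B e := by
  induction e using Sym2.ind with
  | _ x y =>
    rw [signConsistent_mk_iff, signConsistent_mk_iff, h x (Sym2.mem_mk_left x y),
      h y (Sym2.mem_mk_right x y)]

def crossingPairs (U : Set V) : Set (Sym2 V) := (U.sym2 ∪ Uᶜ.sym2)ᶜ

theorem mk_mem_crossingPairs_iff {U : Set V} {x y : V} :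
    s(x, y) ∈ crossingPairs U ↔ ¬ (x ∈ U ↔ y ∈ U) := by
  simp only [crossingPairs, mem_compl_iff, mem_union, mk_mem_sym2_iff]
  tauto

theorem signConsistent_symmDiff_iff (sign : Sym2 V → Bool) (A U : Set V) (e : Sym2 V) :
    SignConsistent sign (A ∆ U) e ↔ (SignConsistent sign A e ↔ e ∉ crossingPairs U) := by
  induction e using Sym2.ind with
  | _ x y =>
    simp only [signConsistent_mk_iff, mk_mem_crossingPairs_iff, mem_symmDiff]
    tauto

theorem ncard_eq_inter_sym2_add_inter_compl_sym2_add [Finite V] (S : Set (Sym2 V))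
    (U : Set V) :
    S.ncard = (S ∩ U.sym2).ncard + (S ∩ Uᶜ.sym2).ncard + (S ∩ crossingPairs U).ncard := by
  have hdisj : Disjoint (S ∩ U.sym2) (S ∩ Uᶜ.sym2) := by
    refine disjoint_left.mpr fun e he he' => ?_
    induction e using Sym2.ind with
    | _ x y => exact (mk_mem_sym2_iff.mp he'.2).1 (mk_mem_sym2_iff.mp he.2).1
  rw [← ncard_union_eq hdisj, ← inter_union_distrib_left, crossingPairs, ← sdiff_eq,
    ncard_inter_add_ncard_sdiff_eq_ncard]

variable (G : SimpleGraph V) (sign : Sym2 V → Bool)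

def consistentEdges (A : Set V) : Set (Sym2 V) := {e | e ∈ G.edgeSet ∧ SignConsistent sign A e}

theorem balCount_eq_ncard_consistentEdges (A : Set V) :
    balCount G sign A = (consistentEdges G sign A).ncard := rfl

theorem bddAbove_range_balCount [Finite V] :
    BddAbove {n | ∃ A : Set V, n = balCount G sign A} := by
  refine ⟨G.edgeSet.ncard, ?_⟩
  rintro n ⟨A, rfl⟩
  exact ncard_le_ncard fun e he => he.1

theorem balCount_le_beta [Finite V] (A : Set V) : balCount G sign A ≤ beta G sign :=
  le_csSup (bddAbove_range_balCount G sign) ⟨A, rfl⟩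

theorem exists_balCount_eq_beta [Finite V] : ∃ A : Set V, balCount G sign A = beta G sign := by
  obtain ⟨A, hA⟩ := Nat.sSup_mem (s := {n | ∃ A : Set V, n = balCount G sign A})
    ⟨balCount G sign ∅, ∅, rfl⟩ (bddAbove_range_balCount G sign)
  exact ⟨A, hA.symm⟩

/-- Flipping the side of the vertices of `U` keeps the consistency of the edges inside `U` or
inside `Uᶜ` and reverses it on the edges between them. -/
theorem balCount_add_balCount_symmDiff [Finite V] (A U : Set V) :
    balCount G sign A + balCount G sign (A ∆ U) =
      2 * (consistentEdges G sign A ∩ U.sym2).ncard +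
        2 * (consistentEdges G sign A ∩ Uᶜ.sym2).ncard +
          (G.edgeSet ∩ crossingPairs U).ncard := by
  have hflip (e : Sym2 V) := signConsistent_symmDiff_iff sign A U e
  have hsame {T : Set (Sym2 V)} (hT : Disjoint T (crossingPairs U)) :
      consistentEdges G sign (A ∆ U) ∩ T = consistentEdges G sign A ∩ T := by
    ext e
    have he : e ∈ T → e ∉ crossingPairs U := fun h => disjoint_left.mp hT h
    simp only [consistentEdges, mem_inter_iff, mem_ofPred_eq, hflip]
    grind
  have hcrossFlip : consistentEdges G sign (A ∆ U) ∩ crossingPairs U =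
      (G.edgeSet ∩ crossingPairs U) \ consistentEdges G sign A := by
    ext e
    simp only [consistentEdges, mem_inter_iff, mem_sdiff, mem_ofPred_eq, hflip]
    tauto
  have hcross : consistentEdges G sign A ∩ crossingPairs U =
      (G.edgeSet ∩ crossingPairs U) ∩ consistentEdges G sign A := by
    ext e
    simp only [consistentEdges, mem_inter_iff, mem_ofPred_eq]
    tauto
  have hsplit := ncard_inter_add_ncard_sdiff_eq_ncard (G.edgeSet ∩ crossingPairs U)
    (consistentEdges G sign A)
  rw [balCount_eq_ncard_consistentEdges, balCount_eq_ncard_consistentEdges,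
    ncard_eq_inter_sym2_add_inter_compl_sym2_add _ U,
    ncard_eq_inter_sym2_add_inter_compl_sym2_add (consistentEdges G sign (A ∆ U)) U,
    hsame (disjoint_compl_right_iff_subset.mpr subset_union_left),
    hsame (disjoint_compl_right_iff_subset.mpr subset_union_right), hcrossFlip, hcross]
  omega

theorem image_map_val_edgeSet_induce (U : Set V) :
    Sym2.map (↑) '' (G.induce U).edgeSet = G.edgeSet ∩ U.sym2 := by
  aesop (add simp [Set.ext_iff, Sym2.exists, Sym2.forall, SimpleGraph.adj_comm])

theorem ncard_edgeSet_induce (U : Set V) :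
    (G.induce U).edgeSet.ncard = (G.edgeSet ∩ U.sym2).ncard := by
  rw [← image_map_val_edgeSet_induce,
    ncard_image_of_injective _ (Sym2.map.injective Subtype.val_injective)]

theorem balCount_induce_preimage_val (U A : Set V) :
    balCount (G.induce U) (fun e => sign (Sym2.map Subtype.val e)) (Subtype.val ⁻¹' A) =
      (consistentEdges G sign A ∩ U.sym2).ncard := by
  have hcons : {e : Sym2 U | SignConsistent (fun e => sign (Sym2.map Subtype.val e))
      (Subtype.val ⁻¹' A) e} = Sym2.map Subtype.val ⁻¹' {e | SignConsistent sign A e} := by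
    ext e
    induction e using Sym2.ind with
    | _ x y => simp only [mem_ofPred_eq, mem_preimage, Sym2.map_mk, signConsistent_mk_iff]
  have hset : consistentEdges G sign A ∩ U.sym2 =
      Sym2.map (↑) '' (G.induce U).edgeSet ∩ {e | SignConsistent sign A e} := by
    rw [image_map_val_edgeSet_induce]
    ext e
    simp only [consistentEdges, mem_inter_iff, mem_ofPred_eq]
    tauto
  rw [hset, ← image_inter_preimage, ← hcons,
    ncard_image_of_injective _ (Sym2.map.injective Subtype.val_injective)]
  rfl

/-- Glue an optimal partition of `G[U]` to `A` outside `U`, and compare with its flip on `U`. -/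
theorem two_mul_betaOn_add_le_two_mul_beta [Finite V] (U A : Set V) :
    2 * betaOn G sign U + 2 * (consistentEdges G sign A ∩ Uᶜ.sym2).ncard +
      (G.edgeSet ∩ crossingPairs U).ncard ≤ 2 * beta G sign := by
  obtain ⟨A', hA'⟩ :=
    exists_balCount_eq_beta (G.induce U) fun e => sign (Sym2.map Subtype.val e)
  set B : Set V := Subtype.val '' A' ∪ A \ U
  have hBU : Subtype.val ⁻¹' B = A' := by
    ext x
    simp [B]
  have hBUc : consistentEdges G sign B ∩ Uᶜ.sym2 = consistentEdges G sign A ∩ Uᶜ.sym2 := by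
    ext e
    simp only [consistentEdges, mem_inter_iff, mem_ofPred_eq, and_congr_left_iff]
    intro he
    rw [signConsistent_congr fun x hx => ?_]
    have hxU : x ∉ U := mem_sym2_iff_subset.mp he hx
    simp [B, hxU]
  have hU : betaOn G sign U = (consistentEdges G sign B ∩ U.sym2).ncard := by
    rw [betaOn, ← hA', ← hBU, balCount_induce_preimage_val]
  have hflip := balCount_add_balCount_symmDiff G sign B U
  rw [hBUc, ← hU] at hflip
  have := balCount_le_beta G sign B
  have := balCount_le_beta G sign (B ∆ U)
  omega

end SignedGraph

section Cliques

variable {V : Type*} {G : SimpleGraph V}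

theorem pt_eq_of_connected (hG : G.Connected) :
    pt G = (G.edgeSet.ncard : ℚ) / 2 + ((Nat.card V : ℚ) - 1) / 4 := by
  have hcomp : Nat.card G.ConnectedComponent = 1 :=
    Nat.card_eq_one_iff_unique.mpr ⟨hG.preconnected.subsingleton_connectedComponent,
      ⟨G.connectedComponentMk hG.nonempty.some⟩⟩
  rw [pt, hcomp, Nat.cast_one]

theorem ncard_edgeSet_lt_choose_two [Finite V] {u w : V} (huw : u ≠ w) (h : ¬ G.Adj u w) :
    G.edgeSet.ncard < (Nat.card V).choose 2 := by
  classical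
  have := Fintype.ofFinite V
  rw [← SimpleGraph.coe_edgeFinset, ncard_coe_finset, Nat.card_eq_fintype_card,
    ← SimpleGraph.card_edgeFinset_top_eq_card_choose_two]
  refine Finset.card_lt_card (SimpleGraph.edgeFinset_ssubset_edgeFinset.mpr ?_)
  exact lt_top_iff_ne_top.mpr fun hG => h (by simpa [hG] using huw)

theorem adj_of_mem_of_mem_union_pair {C : Set V} {v b x y : V} (hv : G.IsClique (C ∪ {v}))
    (hb : G.IsClique (C ∪ {b})) (hx : x ∈ C) (hy : y ∈ C ∪ {v, b}) (hxy : x ≠ y) :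
    G.Adj x y := by
  rcases hy with hy | hy | hy
  · exact hv (Or.inl hx) (Or.inl hy) hxy
  · exact hv (Or.inl hx) (Or.inr hy) hxy
  · exact hb (Or.inl hx) (Or.inr hy) hxy

theorem mem_union_singleton_of_adj {C : Set V} {v b x y : V} (hvb : ¬ G.Adj v b)
    (hx : x ∈ C ∪ {v, b}) (hy : y ∈ C ∪ {v, b}) (hxy : G.Adj x y) :
    (x ∈ C ∪ {v} ∧ y ∈ C ∪ {v}) ∨ (x ∈ C ∪ {b} ∧ y ∈ C ∪ {b}) := by
  rcases hx with hx | rfl | rfl <;> rcases hy with hy | rfl | rfl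
  all_goals first
    | exact absurd hxy (G.loopless _)
    | exact absurd hxy hvb
    | exact absurd hxy.symm hvb
    | simp_all

variable {sign : Sym2 V → Bool}

theorem sign_eq_true_iff_of_not_positiveTriangle {a x y : V} (hax : G.Adj a x)
    (hxy : G.Adj x y) (hya : G.Adj y a) (h : ¬ PositiveTriangle G sign a x y) :
    sign s(x, y) = true ↔ sign s(a, x) ≠ sign s(a, y) := by
  rw [PositiveTriangle, Sym2.eq_swap (a := y)] at h
  simp only [hax, hxy, hya, true_and] at h
  revert h
  cases sign s(a, x) <;> cases sign s(x, y) <;> cases sign s(a, y) <;> decide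

def starLabel [DecidableEq V] (sign : Sym2 V → Bool) (a x : V) : Bool :=
  if x = a then false else sign s(a, x)

theorem sign_eq_true_iff_starLabel_ne [DecidableEq V] {S : Set V} (hS : G.IsClique S)
    (hpos : ¬ ∃ x y z : V, x ∈ S ∧ y ∈ S ∧ z ∈ S ∧ PositiveTriangle G sign x y z)
    {a x y : V} (ha : a ∈ S) (hx : x ∈ S) (hy : y ∈ S) (hxy : G.Adj x y) :
    sign s(x, y) = true ↔ starLabel sign a x ≠ starLabel sign a y := by
  by_cases hxa : x = a
  · subst hxa
    simp [starLabel, hxy.ne.symm]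
  by_cases hya : y = a
  · subst hya
    simp [starLabel, hxa, Sym2.eq_swap]
  rw [starLabel, starLabel, if_neg hxa, if_neg hya]
  exact sign_eq_true_iff_of_not_positiveTriangle (hS ha hx (Ne.symm hxa)) hxy (hS hy ha hya)
    fun h => hpos ⟨a, x, y, ha, hx, hy, h⟩

theorem sq_le_four_mul_div_two_mul_sub_div_two_add_one (s : ℕ) :
    s ^ 2 ≤ 4 * (s / 2 * (s - s / 2)) + 1 := by
  rcases Nat.even_or_odd' s with ⟨j, rfl | rfl⟩
  · rw [show 2 * j / 2 = j by omega, show 2 * j - j = j by omega]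
    ring_nf
    omega
  · rw [show (2 * j + 1) / 2 = j by omega, show 2 * j + 1 - j = j + 1 by omega]
    ring_nf
    omega

theorem mul_ncard_sdiff_le_ncard_consistentEdges [Finite V] {W P : Set V} {g : V → Bool}
    (hg : ∀ x ∈ W, ∀ y ∈ W, G.Adj x y → (sign s(x, y) = true ↔ g x ≠ g y))
    (hPW : P ⊆ W) (hadj : ∀ x ∈ P, ∀ y ∈ W \ P, G.Adj x y) :
    P.ncard * (W \ P).ncard ≤
      (consistentEdges G sign {x | g x = true ↔ x ∈ P} ∩ W.sym2).ncard := by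
  rw [← ncard_prod]
  refine ncard_le_ncard_of_injOn (fun p => s(p.1, p.2)) ?_ ?_
  · rintro ⟨x, y⟩ ⟨hx, hy⟩
    have hxy := hadj x hx y hy
    refine ⟨⟨hxy, ?_⟩, mk_mem_sym2_iff.mpr ⟨hPW hx, hy.1⟩⟩
    rw [signConsistent_mk_iff, hg x (hPW hx) y hy.1 hxy]
    simp only [mem_ofPred_eq, hx, hy.2]
    cases g x <;> cases g y <;> simp
  · rintro ⟨x, y⟩ ⟨hx, hy⟩ ⟨x', y'⟩ ⟨hx', hy'⟩ h
    rcases Sym2.eq_iff.mp h with ⟨rfl, rfl⟩ | ⟨rfl, rfl⟩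
    · rfl
    · exact absurd hx' hy.2

/-- `starLabel` at a vertex of `C` makes `G[C ∪ {v, b}]` antibalanced; then split it evenly. -/
theorem exists_sq_le_four_mul_ncard_consistentEdges_add_one [Finite V] {C : Set V} {v b : V}
    (hC : C.Nonempty) (hvb : ¬ G.Adj v b)
    (hcv : G.IsClique (C ∪ {v})) (hcb : G.IsClique (C ∪ {b}))
    (htv : ¬ ∃ x y z : V, x ∈ C ∪ {v} ∧ y ∈ C ∪ {v} ∧ z ∈ C ∪ {v} ∧
      PositiveTriangle G sign x y z)
    (htb : ¬ ∃ x y z : V, x ∈ C ∪ {b} ∧ y ∈ C ∪ {b} ∧ z ∈ C ∪ {b} ∧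
      PositiveTriangle G sign x y z) :
    ∃ A : Set V, (C ∪ {v, b}).ncard ^ 2 ≤
      4 * (consistentEdges G sign A ∩ (C ∪ {v, b}).sym2).ncard + 1 := by
  classical
  obtain ⟨c, hc⟩ := hC
  set W := C ∪ {v, b}
  have hCW : C ⊆ W := subset_union_left
  have hWC : W.ncard ≤ C.ncard + 2 :=
    (ncard_union_le _ _).trans (by grw [ncard_insert_le, ncard_singleton])
  have hk : 1 ≤ C.ncard := (ncard_pos).mpr ⟨c, hc⟩
  obtain ⟨P, hPC, hP⟩ := exists_subset_card_eq (show W.ncard / 2 ≤ C.ncard by omega)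
  have hg : ∀ x ∈ W, ∀ y ∈ W, G.Adj x y →
      (sign s(x, y) = true ↔ starLabel sign c x ≠ starLabel sign c y) := by
    intro x hx y hy hxy
    rcases mem_union_singleton_of_adj hvb hx hy hxy with ⟨hx, hy⟩ | ⟨hx, hy⟩
    · exact sign_eq_true_iff_starLabel_ne hcv htv (Or.inl hc) hx hy hxy
    · exact sign_eq_true_iff_starLabel_ne hcb htb (Or.inl hc) hx hy hxy
  have hcut := mul_ncard_sdiff_le_ncard_consistentEdges hg (hPC.trans hCW) fun x hx y hy =>
    adj_of_mem_of_mem_union_pair hcv hcb (hPC hx) hy.1 (ne_of_mem_of_not_mem hx hy.2)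
  rw [ncard_sdiff (hPC.trans hCW), hP] at hcut
  exact ⟨{x | starLabel sign c x = true ↔ x ∈ P},
    (sq_le_four_mul_div_two_mul_sub_div_two_add_one W.ncard).trans (by omega)⟩

end Cliques

/-- safety of Rule 7. Let `G` be a connected signed graph and
`v, b` nonadjacent vertices such that `G − {v,b}` has exactly two connected
components, with vertex sets `C` and `Y`, and such that both `G[C ∪ {v}]` and
`G[C ∪ {b}]` are cliques containing no positive triangle. Then
`β(G) − pt(G) ≥ β(G[Y]) − pt(G[Y]) + 1/4`. -/
theorem stmt13 {V : Type*} [Fintype V] (G : SimpleGraph V) (sign : Sym2 V → Bool)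
    (hconn : G.Connected) (v b : V) (hvb : v ≠ b) (hadj : ¬ G.Adj v b)
    (C Y : Set V) (hC : IsCompOf G {v, b} C) (hY : IsCompOf G {v, b} Y)
    (hCY : Disjoint C Y) (hcover : C ∪ Y = ({v, b}ᶜ : Set V))
    (hcliquev : G.IsClique (C ∪ {v})) (hcliqueb : G.IsClique (C ∪ {b}))
    (htriv : ¬ ∃ x y z : V, x ∈ C ∪ {v} ∧ y ∈ C ∪ {v} ∧ z ∈ C ∪ {v} ∧
      PositiveTriangle G sign x y z)
    (htrib : ¬ ∃ x y z : V, x ∈ C ∪ {b} ∧ y ∈ C ∪ {b} ∧ z ∈ C ∪ {b} ∧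
      PositiveTriangle G sign x y z) :
    (beta G sign : ℚ) - pt G ≥ (betaOn G sign Y : ℚ) - ptOn G Y + 1 / 4 := by
  obtain ⟨hCvb, hCconn, -⟩ := hC
  obtain ⟨hYvb, hYconn, -⟩ := hY
  have hW : C ∪ {v, b} = Yᶜ := by
    ext x
    have := congrArg (x ∈ ·) hcover
    simp only [eq_iff_iff, mem_union, mem_compl_iff] at this ⊢
    have hxCY : x ∈ C → x ∉ Y := fun h => disjoint_left.mp hCY h
    have hxYvb : x ∈ Y → x ∉ ({v, b} : Set V) := fun h => disjoint_left.mp hYvb h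
    tauto
  have hWcard : Yᶜ.ncard = C.ncard + 2 := by rw [← hW, ncard_union_eq hCvb, ncard_pair hvb]
  obtain ⟨A, hA⟩ := exists_sq_le_four_mul_ncard_consistentEdges_add_one
    (nonempty_coe_sort.mp hCconn.nonempty) hadj hcliquev hcliqueb htriv htrib
  rw [hW, hWcard] at hA
  have hβ := two_mul_betaOn_add_le_two_mul_beta G sign Y A
  have hm := ncard_eq_inter_sym2_add_inter_compl_sym2_add G.edgeSet Y
  have hmW := ncard_edgeSet_lt_choose_two (G := G.induce Yᶜ) (u := ⟨v, hW ▸ by simp⟩)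
    (w := ⟨b, hW ▸ by simp⟩) (by simpa using hvb) (by simpa using hadj)
  rw [ncard_edgeSet_induce, Nat.card_coe_set_eq, hWcard, Nat.lt_iff_add_one_le] at hmW
  have hmW' := Nat.cast_le (α := ℚ) |>.mpr hmW
  rw [Nat.cast_choose_two] at hmW'
  have hn := ncard_add_ncard_compl Y
  rw [ge_iff_le, ptOn, pt_eq_of_connected hconn, pt_eq_of_connected hYconn,
    ncard_edgeSet_induce, Nat.card_coe_set_eq, ← hn, hm, hWcard]
  qify at hA hβ
  push_cast at hA hmW' ⊢
  linarith
end

section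
/- Let G be a signed graph, S ⊆ V(G), and C ⊆ V(G)∖S a vertex set inducing a clique in G all of whose edges are negative. Let X ⊆ C be such that |X| ≥ |C|/2 and every neighbor in G of every vertex of X lies in C ∪ S. Then there exists a partition (V1,V2) of V(G) whose induced balanced subgraph H has β(G) edges and satisfies at least one of: (i) |V2 ∩ C| ≤ |V1 ∩ C| ≤ |N_G(X) ∩ S| + |V2 ∩ C|; (ii) |V2 ∩ C| ≤ |V1 ∩ C| ≤ |V2 ∩ C| + 1. -/
lemma signConsistent_iff {V : Type*} (sign : Sym2 V → Bool) (A : Set V) (u v : V) :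
    SignConsistent sign A s(u, v) ↔ (sign s(u, v) = true ↔ (u ∈ A ↔ v ∈ A)) := by
  constructor
  · exact fun h => h u v rfl
  · intro h u' v' he
    rw [Sym2.eq_iff] at he
    rcases he with ⟨rfl, rfl⟩ | ⟨rfl, rfl⟩
    · exact h
    · exact h.trans ⟨Iff.symm, Iff.symm⟩

lemma balCount_compl {V : Type*} (G : SimpleGraph V) (sign : Sym2 V → Bool) (A : Set V) :
    balCount G sign Aᶜ = balCount G sign A := by
  unfold balCount
  congr 1
  ext e
  simp only [Set.mem_setOf_eq, SignConsistent, Set.mem_compl_iff, not_iff_not]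

lemma balCount_split {V : Type*} [Fintype V] (G : SimpleGraph V) (sign : Sym2 V → Bool)
    (B : Set V) (x : V) :
    balCount G sign B =
      {e | e ∈ G.edgeSet ∧ SignConsistent sign B e ∧ x ∉ e}.ncard +
      {v | G.Adj x v ∧ SignConsistent sign B s(x, v)}.ncard := by
  have himg : {e | e ∈ G.edgeSet ∧ SignConsistent sign B e ∧ x ∈ e}
      = (fun v => s(x, v)) '' {v | G.Adj x v ∧ SignConsistent sign B s(x, v)} := by
    ext e
    simp only [Set.mem_setOf_eq, Set.mem_image]
    constructor
    · rintro ⟨he, hc, hxe⟩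
      obtain ⟨y, rfl⟩ := Sym2.mem_iff_exists.mp hxe
      exact ⟨y, ⟨G.mem_edgeSet.mp he, hc⟩, rfl⟩
    · rintro ⟨v, ⟨hadj, hc⟩, rfl⟩
      exact ⟨G.mem_edgeSet.mpr hadj, hc, Sym2.mem_mk_left x v⟩
  have hsplit : {e | e ∈ G.edgeSet ∧ SignConsistent sign B e}
      = {e | e ∈ G.edgeSet ∧ SignConsistent sign B e ∧ x ∉ e} ∪
        {e | e ∈ G.edgeSet ∧ SignConsistent sign B e ∧ x ∈ e} := by
    ext e; simp only [Set.mem_setOf_eq, Set.mem_union]; tauto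
  have hdisj : Disjoint {e | e ∈ G.edgeSet ∧ SignConsistent sign B e ∧ x ∉ e}
      {e | e ∈ G.edgeSet ∧ SignConsistent sign B e ∧ x ∈ e} := by
    rw [Set.disjoint_left]; rintro e ⟨_, _, h1⟩ ⟨_, _, h2⟩; exact h1 h2
  have hinj : Function.Injective (fun v : V => s(x, v)) := fun a b h => Sym2.congr_right.mp h
  rw [balCount, hsplit, Set.ncard_union_eq hdisj, himg, Set.ncard_image_of_injective _ hinj]

lemma consistent_flip {V : Type*} (G : SimpleGraph V) (sign : Sym2 V → Bool) (A : Set V)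
    (x v : V) (hadj : G.Adj x v) (hx : x ∈ A) :
    SignConsistent sign (A \ {x}) s(x, v) ↔ ¬ SignConsistent sign A s(x, v) := by
  have hne : v ≠ x := fun h => G.irrefl (h ▸ hadj)
  rw [signConsistent_iff, signConsistent_iff]
  have h1 : x ∉ A \ {x} := fun h => h.2 rfl
  have h2 : v ∈ A \ {x} ↔ v ∈ A := by simp [hne]
  constructor
  · intro h hc; rw [h2] at h; tauto
  · intro h; rw [h2]; tauto

lemma unchanged_away {V : Type*} (G : SimpleGraph V) (sign : Sym2 V → Bool) (A : Set V)
    (x : V) :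
    {e | e ∈ G.edgeSet ∧ SignConsistent sign (A \ {x}) e ∧ x ∉ e} =
    {e | e ∈ G.edgeSet ∧ SignConsistent sign A e ∧ x ∉ e} := by
  ext e
  induction e using Sym2.ind with
  | _ u v =>
    simp only [Set.mem_setOf_eq, Sym2.mem_iff, not_or]
    constructor
    · rintro ⟨he, hc, hu, hv⟩
      refine ⟨he, ?_, hu, hv⟩
      rw [signConsistent_iff] at hc ⊢
      have h1 : u ∈ A \ {x} ↔ u ∈ A := by simp [Ne.symm hu]
      have h2 : v ∈ A \ {x} ↔ v ∈ A := by simp [Ne.symm hv]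
      rw [h1, h2] at hc; exact hc
    · rintro ⟨he, hc, hu, hv⟩
      refine ⟨he, ?_, hu, hv⟩
      rw [signConsistent_iff] at hc ⊢
      have h1 : u ∈ A \ {x} ↔ u ∈ A := by simp [Ne.symm hu]
      have h2 : v ∈ A \ {x} ↔ v ∈ A := by simp [Ne.symm hv]
      rw [h1, h2]; exact hc

/-- Let `S ⊆ V(G)` and let `C ⊆ V(G) ∖ S` induce a clique all of
whose edges are negative. Let `X ⊆ C` satisfy `|X| ≥ |C|/2` with all neighbors of `X`
inside `C ∪ S`. Then some partition `(V₁, V₂) = (A, Aᶜ)` induces a balanced subgraph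
with `β(G)` edges and satisfies
`|V₂ ∩ C| ≤ |V₁ ∩ C| ≤ |N_G(X) ∩ S| + |V₂ ∩ C|` or
`|V₂ ∩ C| ≤ |V₁ ∩ C| ≤ |V₂ ∩ C| + 1`. -/
theorem stmt15 {V : Type*} [Fintype V] (G : SimpleGraph V) (sign : Sym2 V → Bool)
    (S C X : Set V) (hCS : Disjoint C S) (hclique : G.IsClique C)
    (hneg : ∀ u ∈ C, ∀ v ∈ C, u ≠ v → sign s(u, v) = false)
    (hXC : X ⊆ C) (hXhalf : (C.ncard : ℚ) / 2 ≤ (X.ncard : ℚ))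
    (hXnb : ∀ x ∈ X, ∀ v : V, G.Adj x v → v ∈ C ∪ S) :
    ∃ A : Set V, balCount G sign A = beta G sign ∧
      (((Aᶜ ∩ C).ncard ≤ (A ∩ C).ncard ∧
          (A ∩ C).ncard ≤ (nbhd G X ∩ S).ncard + (Aᶜ ∩ C).ncard) ∨
        ((Aᶜ ∩ C).ncard ≤ (A ∩ C).ncard ∧
          (A ∩ C).ncard ≤ (Aᶜ ∩ C).ncard + 1)) := by
  classical
  -- β is attained
  have hbddVals : BddAbove {n | ∃ A : Set V, n = balCount G sign A} := by
    refine ⟨G.edgeSet.ncard, ?_⟩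
    rintro n ⟨A, rfl⟩
    exact Set.ncard_le_ncard (fun e he => he.1) G.edgeSet.toFinite
  have hValsne : {n | ∃ A : Set V, n = balCount G sign A}.Nonempty := ⟨_, ∅, rfl⟩
  obtain ⟨A₀, hA₀⟩ : ∃ A : Set V, beta G sign = balCount G sign A :=
    Nat.sSup_mem hValsne hbddVals
  -- WLOG the majority side is A
  obtain ⟨A₁, hA₁beta, hA₁le⟩ : ∃ A : Set V, balCount G sign A = beta G sign ∧
      (Aᶜ ∩ C).ncard ≤ (A ∩ C).ncard := by
    by_cases h : (A₀ᶜ ∩ C).ncard ≤ (A₀ ∩ C).ncard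
    · exact ⟨A₀, hA₀.symm, h⟩
    · refine ⟨A₀ᶜ, by rw [balCount_compl]; exact hA₀.symm, ?_⟩
      rw [compl_compl]; omega
  -- minimize the imbalance d over optimal partitions
  set T : Set ℕ := {d | ∃ A : Set V, balCount G sign A = beta G sign ∧
      (Aᶜ ∩ C).ncard + d = (A ∩ C).ncard} with hTdef
  have hTne : T.Nonempty :=
    ⟨(A₁ ∩ C).ncard - (A₁ᶜ ∩ C).ncard, A₁, hA₁beta, by omega⟩
  obtain ⟨A, hAbeta, hAd⟩ := Nat.sInf_mem hTne
  set d := sInf T with hddef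
  set a := (A ∩ C).ncard with hadef
  set b := (Aᶜ ∩ C).ncard with hbdef
  by_cases hd1 : d ≤ 1
  · exact ⟨A, hAbeta, Or.inr ⟨by omega, by omega⟩⟩
  -- now d ≥ 2
  push_neg at hd1
  have hCsplit : C = (A ∩ C) ∪ (Aᶜ ∩ C) := by
    ext v; by_cases hv : v ∈ A <;> simp [hv]
  have hdisjAC : Disjoint (A ∩ C) (Aᶜ ∩ C) :=
    Disjoint.mono inf_le_left inf_le_left disjoint_compl_right
  have hCcard : C.ncard = a + b := by
    rw [hCsplit]; exact Set.ncard_union_eq hdisjAC (Set.toFinite _) (Set.toFinite _)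
  have hChalf : C.ncard ≤ 2 * X.ncard := by
    have h2 : (C.ncard : ℚ) ≤ 2 * (X.ncard : ℚ) := by linarith
    exact_mod_cast h2
  -- pick x ∈ X ∩ A
  obtain ⟨x, hxX, hxA⟩ : (X ∩ A).Nonempty := by
    by_contra h
    rw [Set.not_nonempty_iff_eq_empty] at h
    have hsub : X ⊆ Aᶜ ∩ C := by
      intro v hv
      refine ⟨fun hvA => ?_, hXC hv⟩
      have hmem : v ∈ X ∩ A := ⟨hv, hvA⟩
      rw [h] at hmem
      exact hmem
    have := Set.ncard_le_ncard hsub (Set.toFinite _)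
    omega
  have hxC : x ∈ C := hXC hxX
  -- characterize consistent neighbours
  have hxAiff : ∀ v, v ∈ C → v ≠ x → (SignConsistent sign A s(x, v) ↔ v ∉ A) := by
    intro v hvC hvx
    rw [signConsistent_iff, hneg x hxC v hvC (Ne.symm hvx)]
    simp only [Bool.false_eq_true, false_iff]
    tauto
  set cxA := {v | G.Adj x v ∧ SignConsistent sign A s(x, v)} with hcxAdef
  set cxA' := {v | G.Adj x v ∧ SignConsistent sign (A \ {x}) s(x, v)} with hcxA'def
  have hcxA : cxA = (Aᶜ ∩ C) ∪ (cxA ∩ S) := by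
    ext v
    constructor
    · intro hv
      rcases hXnb x hxX v hv.1 with hvC | hvS
      · have hvx : v ≠ x := fun h => G.irrefl (h ▸ hv.1)
        exact Or.inl ⟨(hxAiff v hvC hvx).mp hv.2, hvC⟩
      · exact Or.inr ⟨hv, hvS⟩
    · rintro (⟨hvA, hvC⟩ | ⟨hv, _⟩)
      · have hvx : v ≠ x := fun h => hvA (h ▸ hxA)
        have hadj : G.Adj x v := hclique hxC hvC (Ne.symm hvx)
        exact ⟨hadj, (hxAiff v hvC hvx).mpr hvA⟩
      · exact hv
  have hcxA' : cxA' = ((A ∩ C) \ {x}) ∪ (cxA' ∩ S) := by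
    ext v
    constructor
    · intro hv
      rcases hXnb x hxX v hv.1 with hvC | hvS
      · have hvx : v ≠ x := fun h => G.irrefl (h ▸ hv.1)
        have hflip := (consistent_flip G sign A x v hv.1 hxA).mp hv.2
        have hvA : v ∈ A := by
          by_contra hvA
          exact hflip ((hxAiff v hvC hvx).mpr hvA)
        exact Or.inl ⟨⟨hvA, hvC⟩, by simpa using hvx⟩
      · exact Or.inr ⟨hv, hvS⟩
    · rintro (⟨⟨hvA, hvC⟩, hvx'⟩ | ⟨hv, _⟩)
      · have hvx : v ≠ x := by simpa using hvx'
        have hadj : G.Adj x v := hclique hxC hvC (Ne.symm hvx)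
        refine ⟨hadj, (consistent_flip G sign A x v hadj hxA).mpr ?_⟩
        intro hcons
        exact ((hxAiff v hvC hvx).mp hcons) hvA
      · exact hv
  set L := (cxA ∩ S).ncard with hLdef
  set L' := (cxA' ∩ S).ncard with hL'def
  have hdisj1 : Disjoint (Aᶜ ∩ C) (cxA ∩ S) :=
    Disjoint.mono inf_le_right inf_le_right hCS
  have hdisj2 : Disjoint ((A ∩ C) \ {x}) (cxA' ∩ S) :=
    Disjoint.mono (Set.diff_subset.trans inf_le_right) inf_le_right hCS
  have hcxAcard : cxA.ncard = b + L := by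
    rw [hcxA]; exact Set.ncard_union_eq hdisj1 (Set.toFinite _) (Set.toFinite _)
  have hcxA'card : cxA'.ncard = ((A ∩ C) \ {x}).ncard + L' := by
    rw [hcxA']; exact Set.ncard_union_eq hdisj2 (Set.toFinite _) (Set.toFinite _)
  have ha1 : ((A ∩ C) \ {x}).ncard + 1 = a :=
    Set.ncard_diff_singleton_add_one ⟨hxA, hxC⟩ (Set.toFinite _)
  set K := {e | e ∈ G.edgeSet ∧ SignConsistent sign A e ∧ x ∉ e}.ncard with hKdef
  have hbA : balCount G sign A = K + (b + L) := by
    rw [balCount_split G sign A x, ← hcxAdef, hcxAcard]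
  have hbA' : balCount G sign (A \ {x}) = K + (((A ∩ C) \ {x}).ncard + L') := by
    rw [balCount_split G sign (A \ {x}) x, unchanged_away, ← hcxA'def, hcxA'card]
  -- optimality and minimality
  have hle : balCount G sign (A \ {x}) ≤ beta G sign :=
    le_csSup hbddVals ⟨A \ {x}, rfl⟩
  have hneq : balCount G sign (A \ {x}) ≠ beta G sign := by
    intro heq
    have hset1 : (A \ {x}) ∩ C = (A ∩ C) \ {x} := by
      ext v; simp only [Set.mem_inter_iff, Set.mem_diff, Set.mem_singleton_iff]; tauto
    have hset2 : (A \ {x})ᶜ ∩ C = (Aᶜ ∩ C) ∪ {x} := by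
      ext v
      simp only [Set.mem_inter_iff, Set.mem_compl_iff, Set.mem_diff,
        Set.mem_singleton_iff, Set.mem_union, not_and, not_not]
      by_cases hveq : v = x
      · subst hveq; tauto
      · tauto
    have hxnotin : x ∉ Aᶜ ∩ C := fun h => h.1 hxA
    have hb1 : ((A \ {x})ᶜ ∩ C).ncard = b + 1 := by
      rw [hset2, Set.ncard_union_eq (Set.disjoint_singleton_right.mpr hxnotin)
        (Set.toFinite _) (Set.toFinite _), Set.ncard_singleton]
    have hmem2 : d - 2 ∈ T := by
      refine ⟨A \ {x}, heq, ?_⟩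
      rw [hb1, hset1]
      omega
    have := Nat.sInf_le hmem2
    omega
  have hlt : balCount G sign (A \ {x}) < balCount G sign A := by
    rw [hAbeta]; exact lt_of_le_of_ne hle hneq
  -- L ≤ |N(X) ∩ S|
  have hLle : L ≤ (nbhd G X ∩ S).ncard := by
    refine Set.ncard_le_ncard ?_ (Set.toFinite _)
    rintro v ⟨⟨hadj, _⟩, hvS⟩
    exact ⟨⟨fun hvX => Set.disjoint_left.mp hCS (hXC hvX) hvS, x, hxX, hadj⟩, hvS⟩
  exact ⟨A, hAbeta, Or.inl ⟨by omega, by omega⟩⟩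
end

section
/- Let G be a connected signed graph, S ⊆ V(G), and C ⊆ V(G)∖S a vertex set inducing a clique in G all of whose edges are negative. Let X ⊆ C be such that |X| > (|C| + |N_G(X) ∩ S|)/2, every neighbor in G of every vertex of X lies in C ∪ S, and all vertices x ∈ X have the same set of positive neighbors in S and the same set of negative neighbors in S. Let x1, x2 ∈ X be distinct and suppose G−{x1,x2} is connected. Then β(G) = β(G−{x1,x2}) + d/2 + 1, where d is the number of edges of G joining {x1,x2} to V(G)∖{x1,x2}. -/
/- ### auxiliary lemmas -/


lemma sc_pair_iff {V : Type*} (sign : Sym2 V → Bool) (A : Set V) {u v : V} :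
    SignConsistent sign A s(u,v) ↔ (sign s(u,v) = true ↔ (u ∈ A ↔ v ∈ A)) := by
  constructor
  · intro H; exact H u v rfl
  · intro H a b hab
    rcases Sym2.eq_iff.mp hab with ⟨rfl, rfl⟩ | ⟨rfl, rfl⟩
    · exact H
    · exact H.trans (by tauto)

lemma balCount_le_card {V : Type*} [Finite V] (G : SimpleGraph V) (sign : Sym2 V → Bool)
    (A : Set V) : balCount G sign A ≤ Nat.card (Sym2 V) := by
  rw [← Set.ncard_univ]
  exact Set.ncard_le_ncard (Set.subset_univ _) Set.finite_univ

lemma sym2_map_val_inj {V : Type*} (U : Set V) :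
    Function.Injective (Sym2.map (Subtype.val : ↥U → V)) :=
  Sym2.map.injective Subtype.val_injective

lemma induce_edge_card {V : Type*} (G : SimpleGraph V) (U : Set V) (P : Sym2 V → Prop) :
    {e : Sym2 ↥U | e ∈ (G.induce U).edgeSet ∧ P (Sym2.map Subtype.val e)}.ncard
      = {e : Sym2 V | e ∈ G.edgeSet ∧ (∀ w ∈ e, w ∈ U) ∧ P e}.ncard := by
  rw [← Set.ncard_image_of_injective _ (sym2_map_val_inj U)]
  congr 1
  ext e
  constructor
  · rintro ⟨e', ⟨he', hP⟩, rfl⟩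
    induction e' using Sym2.ind with
    | _ a b =>
      rw [Sym2.map_pair_eq]
      refine ⟨?_, ?_, by rwa [Sym2.map_pair_eq] at hP⟩
      · exact he'
      · intro w hw
        rcases Sym2.mem_iff.mp hw with rfl | rfl
        · exact a.2
        · exact b.2
  · intro he
    induction e using Sym2.ind with
    | _ a b =>
      obtain ⟨he, hU, hP⟩ := he
      refine ⟨s(⟨a, hU a (by simp)⟩, ⟨b, hU b (by simp)⟩), ⟨?_, ?_⟩, by rw [Sym2.map_pair_eq]⟩
      · exact he
      · rwa [Sym2.map_pair_eq]

lemma swap_key {V : Type*} [DecidableEq V] (G : SimpleGraph V) (sign : Sym2 V → Bool)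
    {a b : V}
    (hnb : ∀ v, v ≠ a → v ≠ b → (G.Adj a v ↔ G.Adj b v))
    (hsg : ∀ v, v ≠ a → v ≠ b → G.Adj a v → sign s(a,v) = sign s(b,v))
    {u v : V} (huv : G.Adj u v) :
    G.Adj (Equiv.swap a b u) (Equiv.swap a b v) ∧
      sign s(Equiv.swap a b u, Equiv.swap a b v) = sign s(u,v) := by
  have scomm : ∀ x y : V, sign s(x,y) = sign s(y,x) := fun x y => congrArg sign Sym2.eq_swap
  rcases eq_or_ne u a with hu | hua
  · rcases eq_or_ne v b with hv | hvb
    · simp only [hu, hv] at huv ⊢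
      rw [Equiv.swap_apply_left, Equiv.swap_apply_right]
      exact ⟨huv.symm, scomm b a⟩
    · have hva : v ≠ a := fun h => huv.ne (hu.trans h.symm)
      simp only [hu] at huv ⊢
      rw [Equiv.swap_apply_left, Equiv.swap_apply_of_ne_of_ne hva hvb]
      exact ⟨(hnb v hva hvb).mp huv, (hsg v hva hvb huv).symm⟩
  · rcases eq_or_ne u b with hu | hub
    · rcases eq_or_ne v a with hv | hva
      · simp only [hu, hv] at huv ⊢
        rw [Equiv.swap_apply_left, Equiv.swap_apply_right]
        exact ⟨huv.symm, scomm a b⟩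
      · have hvb : v ≠ b := fun h => huv.ne (hu.trans h.symm)
        simp only [hu] at huv ⊢
        rw [Equiv.swap_apply_right, Equiv.swap_apply_of_ne_of_ne hva hvb]
        exact ⟨(hnb v hva hvb).mpr huv, hsg v hva hvb ((hnb v hva hvb).mpr huv)⟩
    · rcases eq_or_ne v a with hv | hva
      · simp only [hv] at huv ⊢
        rw [Equiv.swap_apply_left, Equiv.swap_apply_of_ne_of_ne hua hub]
        refine ⟨((hnb u hua hub).mp huv.symm).symm, ?_⟩
        rw [scomm u b, scomm u a, ← hsg u hua hub huv.symm]
      · rcases eq_or_ne v b with hv | hvb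
        · simp only [hv] at huv ⊢
          rw [Equiv.swap_apply_right, Equiv.swap_apply_of_ne_of_ne hua hub]
          refine ⟨((hnb u hua hub).mpr huv.symm).symm, ?_⟩
          rw [scomm u a, scomm u b, hsg u hua hub ((hnb u hua hub).mpr huv.symm)]
        · rw [Equiv.swap_apply_of_ne_of_ne hua hub, Equiv.swap_apply_of_ne_of_ne hva hvb]
          exact ⟨huv, rfl⟩

lemma balCount_swap {V : Type*} [DecidableEq V] (G : SimpleGraph V) (sign : Sym2 V → Bool)
    (A : Set V) {a b : V}
    (hnb : ∀ v, v ≠ a → v ≠ b → (G.Adj a v ↔ G.Adj b v))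
    (hsg : ∀ v, v ≠ a → v ≠ b → G.Adj a v → sign s(a,v) = sign s(b,v)) :
    balCount G sign (Equiv.swap a b ⁻¹' A) = balCount G sign A := by
  set π := Equiv.swap a b with hπ
  have hinv : ∀ e : Sym2 V, Sym2.map π (Sym2.map π e) = e := by
    intro e
    rw [Sym2.map_map]
    have : (π : V → V) ∘ π = id := funext fun x => Equiv.swap_apply_self a b x
    rw [this, Sym2.map_id]
    rfl
  have key : ∀ e : Sym2 V, e ∈ G.edgeSet ∧ SignConsistent sign (π ⁻¹' A) e →
      Sym2.map π e ∈ G.edgeSet ∧ SignConsistent sign A (Sym2.map π e) := by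
    intro e
    induction e using Sym2.ind with
    | _ u v =>
      rintro ⟨he, hc⟩
      have huv : G.Adj u v := he
      obtain ⟨hadj, hsgn⟩ := swap_key G sign hnb hsg huv
      rw [Sym2.map_pair_eq]
      refine ⟨hadj, ?_⟩
      rw [sc_pair_iff]
      rw [hsgn]
      rw [sc_pair_iff] at hc
      exact hc.trans (by rfl)
  unfold balCount
  rw [show {e | e ∈ G.edgeSet ∧ SignConsistent sign A e}
      = Sym2.map π '' {e | e ∈ G.edgeSet ∧ SignConsistent sign (π ⁻¹' A) e} from ?_]
  · exact (Set.ncard_image_of_injective _ (Sym2.map.injective π.injective)).symm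
  · ext e
    constructor
    · intro he
      refine ⟨Sym2.map π e, ?_, hinv e⟩
      induction e using Sym2.ind with
      | _ u v =>
        obtain ⟨he', hc⟩ := he
        have huv : G.Adj u v := he'
        obtain ⟨hadj, hsgn⟩ := swap_key G sign hnb hsg huv
        rw [Sym2.map_pair_eq]
        refine ⟨hadj, ?_⟩
        rw [sc_pair_iff, hsgn]
        rw [sc_pair_iff] at hc
        refine hc.trans (iff_congr ?_ ?_) <;>
          simp [Set.mem_preimage, Equiv.swap_apply_self, π]
    · rintro ⟨e', he', rfl⟩
      exact key e' he'

lemma card_cc {V : Type*} (G : SimpleGraph V) (h : G.Connected) :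
    Nat.card G.ConnectedComponent = 1 := by
  haveI : Nonempty V := h.nonempty
  haveI : Subsingleton G.ConnectedComponent := by
    constructor
    intro a b
    refine SimpleGraph.ConnectedComponent.ind₂ (fun u v => ?_) a b
    exact SimpleGraph.ConnectedComponent.eq.mpr (h.preconnected u v)
  haveI : Nonempty G.ConnectedComponent :=
    ⟨G.connectedComponentMk (Classical.arbitrary V)⟩
  exact Nat.card_unique

/-- validity of kernelization Rule 8. Let `G` be a connected signed
graph, `S ⊆ V(G)`, and `C ⊆ V(G) ∖ S` a clique all of whose edges are negative. Let
`X ⊆ C` satisfy `|X| > (|C| + |N_G(X) ∩ S|)/2`, with all neighbors of `X` in `C ∪ S`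
and all vertices of `X` having the same positive and the same negative neighbors in
`S`. If `x₁, x₂ ∈ X` are distinct and `G − {x₁, x₂}` is connected, then
`β(G) − pt(G) = β(G − {x₁,x₂}) − pt(G − {x₁,x₂})`; more precisely
`β(G) = β(G − {x₁,x₂}) + d/2 + 1` where `d` is the number of edges joining
`{x₁, x₂}` to the rest of `G`. -/
theorem stmt17 {V : Type*} [Fintype V] (G : SimpleGraph V) (sign : Sym2 V → Bool)
    (hconn : G.Connected)
    (S C X : Set V) (hCS : Disjoint C S) (hclique : G.IsClique C)
    (hneg : ∀ u ∈ C, ∀ v ∈ C, u ≠ v → sign s(u, v) = false)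
    (hXC : X ⊆ C)
    (hXsize : ((C.ncard : ℚ) + ((nbhd G X ∩ S).ncard : ℚ)) / 2 < (X.ncard : ℚ))
    (hXnb : ∀ x ∈ X, ∀ v : V, G.Adj x v → v ∈ C ∪ S)
    (hsame : ∀ x₁ ∈ X, ∀ x₂ ∈ X, ∀ s ∈ S,
      ((G.Adj x₁ s ∧ sign s(x₁, s) = true) ↔ (G.Adj x₂ s ∧ sign s(x₂, s) = true)) ∧
      ((G.Adj x₁ s ∧ sign s(x₁, s) = false) ↔ (G.Adj x₂ s ∧ sign s(x₂, s) = false)))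
    (x₁ x₂ : V) (hx₁ : x₁ ∈ X) (hx₂ : x₂ ∈ X) (hx12 : x₁ ≠ x₂)
    (hrest : (G.induce ({x₁, x₂}ᶜ : Set V)).Connected) :
    (beta G sign : ℚ) - pt G =
        (betaOn G sign ({x₁, x₂}ᶜ : Set V) : ℚ) - ptOn G ({x₁, x₂}ᶜ : Set V) ∧
      (beta G sign : ℚ) = (betaOn G sign ({x₁, x₂}ᶜ : Set V) : ℚ) +
        ({e | e ∈ G.edgeSet ∧ ∃ p q : V, e = s(p, q) ∧ p ∈ ({x₁, x₂} : Set V) ∧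
          q ∉ ({x₁, x₂} : Set V)}.ncard : ℚ) / 2 + 1 := by
  classical
  set U : Set V := ({x₁, x₂}ᶜ : Set V) with hUdef
  have hx1C : x₁ ∈ C := hXC hx₁
  have hx2C : x₂ ∈ C := hXC hx₂
  have hAdj12 : G.Adj x₁ x₂ := hclique hx1C hx2C hx12
  have hsgn12 : sign s(x₁, x₂) = false := hneg x₁ hx1C x₂ hx2C hx12
  have hU' : ∀ w : V, w ∈ U ↔ (w ≠ x₁ ∧ w ≠ x₂) := by
    intro w
    simp [hUdef, not_or]
  -- transfer of adjacency and signs among members of X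
  have hdirX : ∀ x ∈ X, ∀ y ∈ X, ∀ v : V, v ≠ y → G.Adj x v → G.Adj y v := by
    intro x hx y hy v hvy hadj
    rcases hXnb x hx v hadj with hvC | hvS
    · exact hclique (hXC hy) hvC (Ne.symm hvy)
    · cases hsx : sign s(x, v) with
      | true => exact ((hsame x hx y hy v hvS).1.mp ⟨hadj, hsx⟩).1
      | false => exact ((hsame x hx y hy v hvS).2.mp ⟨hadj, hsx⟩).1
  have hsgX : ∀ x ∈ X, ∀ y ∈ X, ∀ v : V, G.Adj x v → v ≠ y → sign s(x,v) = sign s(y,v) := by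
    intro x hx y hy v hadj hvy
    rcases hXnb x hx v hadj with hvC | hvS
    · rw [hneg x (hXC hx) v hvC hadj.ne, hneg y (hXC hy) v hvC (Ne.symm hvy)]
    · cases hsx : sign s(x,v) with
      | true => exact (((hsame x hx y hy v hvS).1.mp ⟨hadj, hsx⟩).2).symm
      | false => exact (((hsame x hx y hy v hvS).2.mp ⟨hadj, hsx⟩).2).symm
  set N : Set V := {v : V | v ≠ x₁ ∧ v ≠ x₂ ∧ G.Adj x₁ v} with hNdef
  have hNx2 : ∀ v : V, v ∈ N ↔ (v ≠ x₁ ∧ v ≠ x₂ ∧ G.Adj x₂ v) := by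
    intro v
    constructor
    · rintro ⟨h1, h2, hadj⟩
      exact ⟨h1, h2, hdirX x₁ hx₁ x₂ hx₂ v h2 hadj⟩
    · rintro ⟨h1, h2, hadj⟩
      exact ⟨h1, h2, hdirX x₂ hx₂ x₁ hx₁ v h1 hadj⟩
  have hsgnN : ∀ v ∈ N, sign s(x₂, v) = sign s(x₁, v) := by
    rintro v ⟨h1, h2, hadj⟩
    exact (hsgX x₁ hx₁ x₂ hx₂ v hadj h2).symm
  set e1 : V → Sym2 V := fun v => s(x₁, v) with he1def
  set e2 : V → Sym2 V := fun v => s(x₂, v) with he2def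
  have htouch : ∀ e ∈ G.edgeSet, ¬(∀ w ∈ e, w ∈ U) →
      e = s(x₁, x₂) ∨ (∃ v ∈ N, e = e1 v) ∨ (∃ v ∈ N, e = e2 v) := by
    have hcase : ∀ u v : V, G.Adj u v → (u = x₁ ∨ u = x₂) →
        (s(u,v) = s(x₁,x₂) ∨ (∃ w ∈ N, s(u,v) = e1 w) ∨ (∃ w ∈ N, s(u,v) = e2 w)) := by
      intro u v hadj hu
      rcases hu with hu | hu
      · subst hu
        by_cases hv : v = x₂
        · subst hv; exact Or.inl rfl
        · exact Or.inr (Or.inl ⟨v, ⟨hadj.ne', hv, hadj⟩, rfl⟩)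
      · subst hu
        by_cases hv : v = x₁
        · subst hv; exact Or.inl Sym2.eq_swap
        · exact Or.inr (Or.inr ⟨v, (hNx2 v).mpr ⟨hv, hadj.ne', hadj⟩, rfl⟩)
    intro e
    induction e using Sym2.ind with
    | _ u v =>
      intro he hnu
      have hadj : G.Adj u v := he
      push_neg at hnu
      obtain ⟨w, hw, hwU⟩ := hnu
      have hw12 : w = x₁ ∨ w = x₂ := by
        have := (hU' w).not.mp (by exact hwU)
        tauto
      rcases Sym2.mem_iff.mp hw with hw' | hw'
      · exact hcase u v hadj (hw' ▸ hw12)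
      · have := hcase v u hadj.symm (hw' ▸ hw12)
        rw [show s(u,v) = s(v,u) from Sym2.eq_swap]
        exact this
  have hinj1 : ∀ s : Set V, s ⊆ N → Set.InjOn e1 s := by
    intro s hs p hp q hq h
    rcases Sym2.eq_iff.mp h with ⟨-, h2⟩ | ⟨h1, -⟩
    · exact h2
    · exact absurd h1.symm (hs hq).1
  have hinj2 : ∀ s : Set V, s ⊆ N → Set.InjOn e2 s := by
    intro s hs p hp q hq h
    rcases Sym2.eq_iff.mp h with ⟨-, h2⟩ | ⟨h1, -⟩
    · exact h2
    · exact absurd h1.symm (hs hq).2.1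
  have hd12 : ∀ p ∈ N, ∀ q ∈ N, e1 p ≠ e2 q := by
    intro p hp q hq h
    rcases Sym2.eq_iff.mp h with ⟨h1, -⟩ | ⟨h1, -⟩
    · exact hx12 h1
    · exact hq.1 h1.symm
  have hp1 : ∀ p ∈ N, s(x₁, x₂) ≠ e1 p := by
    intro p hp h
    rcases Sym2.eq_iff.mp h with ⟨-, h2⟩ | ⟨h1, -⟩
    · exact hp.2.1 h2.symm
    · exact hp.1 h1.symm
  have hp2 : ∀ p ∈ N, s(x₁, x₂) ≠ e2 p := by
    intro p hp h
    rcases Sym2.eq_iff.mp h with ⟨h1, -⟩ | ⟨h1, -⟩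
    · exact hx12 h1
    · exact hp.1 h1.symm
  have hsplit : ∀ A : Set V,
      balCount G sign A
        = {e | e ∈ G.edgeSet ∧ (∀ w ∈ e, w ∈ U) ∧ SignConsistent sign A e}.ncard
          + {e | e ∈ G.edgeSet ∧ ¬(∀ w ∈ e, w ∈ U) ∧ SignConsistent sign A e}.ncard := by
    intro A
    rw [← Set.ncard_union_eq ?_ (Set.toFinite _) (Set.toFinite _)]
    · unfold balCount
      congr 1
      ext e
      simp only [Set.mem_setOf_eq, Set.mem_union]
      by_cases h : ∀ w ∈ e, w ∈ U <;> tauto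
    · rw [Set.disjoint_left]
      rintro e ⟨-, h, -⟩ ⟨-, h', -⟩
      exact h' h
  have hTC : ∀ A : Set V,
      {e | e ∈ G.edgeSet ∧ ¬(∀ w ∈ e, w ∈ U) ∧ SignConsistent sign A e}.ncard
        = (if SignConsistent sign A s(x₁,x₂) then 1 else 0)
          + {v ∈ N | SignConsistent sign A (e1 v)}.ncard
          + {v ∈ N | SignConsistent sign A (e2 v)}.ncard := by
    intro A
    have hx1U : x₁ ∉ U := by
      rw [hU']; tauto
    have hx2U : x₂ ∉ U := by
      rw [hU']; tauto
    have hset : {e | e ∈ G.edgeSet ∧ ¬(∀ w ∈ e, w ∈ U) ∧ SignConsistent sign A e}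
        = ((if SignConsistent sign A s(x₁,x₂) then {s(x₁,x₂)} else (∅ : Set (Sym2 V)))
          ∪ e1 '' {v ∈ N | SignConsistent sign A (e1 v)})
          ∪ e2 '' {v ∈ N | SignConsistent sign A (e2 v)} := by
      ext e
      constructor
      · rintro ⟨he, hnu, hc⟩
        rcases htouch e he hnu with he' | ⟨v, hv, he'⟩ | ⟨v, hv, he'⟩
        · subst he'
          rw [if_pos hc]
          exact Or.inl (Or.inl rfl)
        · subst he'
          exact Or.inl (Or.inr ⟨v, ⟨hv, hc⟩, rfl⟩)
        · subst he'
          exact Or.inr ⟨v, ⟨hv, hc⟩, rfl⟩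
      · rintro ((h | ⟨v, ⟨hvN, hvc⟩, rfl⟩) | ⟨v, ⟨hvN, hvc⟩, rfl⟩)
        · by_cases hp : SignConsistent sign A s(x₁,x₂)
          · rw [if_pos hp] at h
            rw [Set.mem_singleton_iff] at h
            subst h
            refine ⟨hAdj12, fun hall => hx1U (hall x₁ (Sym2.mem_mk_left _ _)), hp⟩
          · rw [if_neg hp] at h
            exact absurd h (Set.notMem_empty _)
        · exact ⟨hvN.2.2, fun hall => hx1U (hall x₁ (Sym2.mem_mk_left _ _)), hvc⟩
        · exact ⟨((hNx2 v).mp hvN).2.2, fun hall => hx2U (hall x₂ (Sym2.mem_mk_left _ _)), hvc⟩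
    rw [hset]
    rw [Set.ncard_union_eq ?d1 (Set.toFinite _) (Set.toFinite _),
        Set.ncard_union_eq ?d2 (Set.toFinite _) (Set.toFinite _),
        Set.ncard_image_of_injOn (hinj1 _ (Set.sep_subset _ _)),
        Set.ncard_image_of_injOn (hinj2 _ (Set.sep_subset _ _))]
    · congr 2
      split <;> simp
    case d1 =>
      refine Set.disjoint_union_left.mpr ⟨?_, ?_⟩
      · by_cases hp : SignConsistent sign A s(x₁,x₂)
        · rw [if_pos hp, Set.disjoint_left]
          rintro e he ⟨v, ⟨hvN, -⟩, rfl⟩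
          rw [Set.mem_singleton_iff] at he
          exact hp2 v hvN he.symm
        · rw [if_neg hp]
          exact Set.empty_disjoint _
      · rw [Set.disjoint_left]
        rintro e ⟨v, ⟨hvN, -⟩, rfl⟩ ⟨w, ⟨hwN, -⟩, hweq⟩
        exact hd12 v hvN w hwN hweq.symm
    case d2 =>
      by_cases hp : SignConsistent sign A s(x₁,x₂)
      · rw [if_pos hp, Set.disjoint_left]
        rintro e he ⟨v, ⟨hvN, -⟩, rfl⟩
        rw [Set.mem_singleton_iff] at he
        exact hp1 v hvN he.symm
      · rw [if_neg hp]
        exact Set.empty_disjoint _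
  have hTCopp : ∀ A : Set V, x₁ ∈ A → x₂ ∉ A →
      {e | e ∈ G.edgeSet ∧ ¬(∀ w ∈ e, w ∈ U) ∧ SignConsistent sign A e}.ncard
        = N.ncard + 1 := by
    intro A h1 h2
    rw [hTC A]
    have hp : SignConsistent sign A s(x₁,x₂) := by
      rw [sc_pair_iff, hsgn12]
      simp only [Bool.false_eq_true, false_iff]
      intro h
      exact h2 (h.mp h1)
    rw [if_pos hp]
    have hs1 : {v ∈ N | SignConsistent sign A (e1 v)}
        = {v ∈ N | sign (e1 v) = true ↔ v ∈ A} := by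
      ext v
      simp only [Set.mem_setOf_eq, he1def, sc_pair_iff]
      constructor
      · rintro ⟨hvN, hc⟩
        exact ⟨hvN, by tauto⟩
      · rintro ⟨hvN, hc⟩
        exact ⟨hvN, by tauto⟩
    have hs2 : {v ∈ N | SignConsistent sign A (e2 v)}
        = N \ {v ∈ N | sign (e1 v) = true ↔ v ∈ A} := by
      ext v
      simp only [Set.mem_setOf_eq, Set.mem_diff, he1def, he2def, sc_pair_iff]
      constructor
      · rintro ⟨hvN, hc⟩
        rw [hsgnN v hvN] at hc
        refine ⟨hvN, ?_⟩
        rintro ⟨-, hcc⟩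
        tauto
      · rintro ⟨hvN, hnc⟩
        have hcc : ¬(sign s(x₁,v) = true ↔ v ∈ A) := fun h => hnc ⟨hvN, h⟩
        refine ⟨hvN, ?_⟩
        rw [hsgnN v hvN]
        tauto
    rw [hs1, hs2]
    have hsub : {v ∈ N | sign (e1 v) = true ↔ v ∈ A} ⊆ N := Set.sep_subset _ _
    have hdiff := Set.ncard_diff_add_ncard_of_subset hsub (Set.toFinite _)
    omega
  have hTCsame : ∀ A : Set V, x₁ ∈ A → x₂ ∈ A →
      {e | e ∈ G.edgeSet ∧ ¬(∀ w ∈ e, w ∈ U) ∧ SignConsistent sign A e}.ncard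
        = 2 * {v ∈ N | sign (e1 v) = true ↔ v ∈ A}.ncard := by
    intro A h1 h2
    rw [hTC A]
    have hp : ¬ SignConsistent sign A s(x₁,x₂) := by
      rw [sc_pair_iff, hsgn12]
      simp [h1, h2]
    rw [if_neg hp]
    have hs1 : {v ∈ N | SignConsistent sign A (e1 v)}
        = {v ∈ N | sign (e1 v) = true ↔ v ∈ A} := by
      ext v
      simp only [Set.mem_setOf_eq, he1def, sc_pair_iff]
      constructor
      · rintro ⟨hvN, hc⟩
        exact ⟨hvN, by tauto⟩
      · rintro ⟨hvN, hc⟩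
        exact ⟨hvN, by tauto⟩
    have hs2 : {v ∈ N | SignConsistent sign A (e2 v)}
        = {v ∈ N | sign (e1 v) = true ↔ v ∈ A} := by
      ext v
      simp only [Set.mem_setOf_eq, he1def, he2def, sc_pair_iff]
      constructor
      · rintro ⟨hvN, hc⟩
        rw [hsgnN v hvN] at hc
        exact ⟨hvN, by tauto⟩
      · rintro ⟨hvN, hc⟩
        refine ⟨hvN, ?_⟩
        rw [hsgnN v hvN]
        tauto
    rw [hs1, hs2]
    omega
  have hIC : ∀ A : Set V,
      {e | e ∈ G.edgeSet ∧ (∀ w ∈ e, w ∈ U) ∧ SignConsistent sign A e}.ncard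
        = balCount (G.induce U) (fun e => sign (Sym2.map Subtype.val e)) {u : ↥U | ↑u ∈ A} := by
    intro A
    unfold balCount
    rw [show {e : Sym2 ↥U | e ∈ (G.induce U).edgeSet ∧
          SignConsistent (fun e => sign (Sym2.map Subtype.val e)) {u : ↥U | ↑u ∈ A} e}
        = {e : Sym2 ↥U | e ∈ (G.induce U).edgeSet ∧ SignConsistent sign A (Sym2.map Subtype.val e)}
        from ?_]
    · rw [induce_edge_card]
    · ext e'
      induction e' using Sym2.ind with
      | _ a b =>
        simp only [Set.mem_setOf_eq, and_congr_right_iff]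
        intro hE
        rw [Sym2.map_pair_eq, sc_pair_iff, sc_pair_iff]
        rw [Sym2.map_pair_eq]
        exact Iff.rfl
  have hNdecomp : N = (C \ {x₁, x₂}) ∪ (nbhd G X ∩ S) := by
    ext v
    constructor
    · rintro ⟨hv1, hv2, hadj⟩
      rcases hXnb x₁ hx₁ v hadj with hvC | hvS
      · exact Or.inl ⟨hvC, by simp [hv1, hv2]⟩
      · refine Or.inr ⟨⟨fun hvX => ?_, x₁, hx₁, hadj⟩, hvS⟩
        exact (Set.disjoint_left.mp hCS (hXC hvX)) hvS
    · rintro (⟨hvC, hv12⟩ | ⟨⟨hvX, x, hxX, hadj⟩, hvS⟩)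
      · simp only [Set.mem_insert_iff, Set.mem_singleton_iff, not_or] at hv12
        exact ⟨hv12.1, hv12.2, hclique hx1C hvC (Ne.symm hv12.1)⟩
      · have hv1 : v ≠ x₁ := fun h => (Set.disjoint_left.mp hCS hx1C) (h ▸ hvS)
        have hv2 : v ≠ x₂ := fun h => (Set.disjoint_left.mp hCS hx2C) (h ▸ hvS)
        exact ⟨hv1, hv2, hdirX x hxX x₁ hx₁ v hv1 hadj⟩
  have hpairC : ({x₁, x₂} : Set V) ⊆ C := by
    intro w hw
    rcases hw with rfl | hw
    · exact hx1C
    · rw [Set.mem_singleton_iff] at hw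
      subst hw
      exact hx2C
  have hNcard : N.ncard = (C.ncard - 2) + (nbhd G X ∩ S).ncard := by
    rw [hNdecomp, Set.ncard_union_eq ?dd (Set.toFinite _) (Set.toFinite _),
      Set.ncard_diff hpairC (Set.toFinite _), Set.ncard_pair hx12]
    case dd =>
      exact Set.disjoint_of_subset Set.diff_subset Set.inter_subset_right hCS
  have hsize' : C.ncard + (nbhd G X ∩ S).ncard + 1 ≤ 2 * X.ncard := by
    have h2 : ((C.ncard : ℚ) + ((nbhd G X ∩ S).ncard : ℚ)) < 2 * (X.ncard : ℚ) := by
      linarith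
    have h3 : C.ncard + (nbhd G X ∩ S).ncard < 2 * X.ncard := by exact_mod_cast h2
    omega
  have hX2 : 2 ≤ X.ncard := by
    have h := Set.ncard_le_ncard (show ({x₁, x₂} : Set V) ⊆ X by
      intro w hw
      rcases hw with rfl | hw
      · exact hx₁
      · rw [Set.mem_singleton_iff] at hw
        subst hw
        exact hx₂) (Set.toFinite _)
    rwa [Set.ncard_pair hx12] at h
  have hXCcard : X.ncard ≤ C.ncard := Set.ncard_le_ncard hXC (Set.toFinite _)
  have hKbdd : BddAbove {n | ∃ B : Set ↥U,
      n = balCount (G.induce U) (fun e => sign (Sym2.map Subtype.val e)) B} := by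
    refine ⟨Nat.card (Sym2 ↥U), ?_⟩
    rintro n ⟨B, rfl⟩
    exact balCount_le_card _ _ _
  have hbddA : BddAbove {n | ∃ A : Set V, n = balCount G sign A} := by
    refine ⟨Nat.card (Sym2 V), ?_⟩
    rintro n ⟨A, rfl⟩
    exact balCount_le_card _ _ _
  have hICle : ∀ A : Set V,
      {e | e ∈ G.edgeSet ∧ (∀ w ∈ e, w ∈ U) ∧ SignConsistent sign A e}.ncard
        ≤ betaOn G sign U := by
    intro A
    rw [hIC A]
    exact le_csSup hKbdd ⟨_, rfl⟩
  have key : ∀ A : Set V, x₁ ∈ A → balCount G sign A ≤ betaOn G sign U + N.ncard + 1 := by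
    intro A h1
    by_cases h2 : x₂ ∈ A
    · by_cases h3 : ∀ x ∈ X, x ∈ A
      · rw [hsplit A, hTCsame A h1 h2]
        have hIC' := hICle A
        have hMsub : {v ∈ N | sign (e1 v) = true ↔ v ∈ A} ⊆ (C \ X) ∪ (nbhd G X ∩ S) := by
          rintro v ⟨hvN, hvc⟩
          rcases hXnb x₁ hx₁ v hvN.2.2 with hvC | hvS
          · refine Or.inl ⟨hvC, fun hvX => ?_⟩
            have hneg' : sign (e1 v) = false := by
              rw [he1def]
              exact hneg x₁ hx1C v hvC (Ne.symm hvN.1)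
            rw [hneg'] at hvc
            exact absurd (hvc.mpr (h3 v hvX)) (by simp)
          · refine Or.inr ⟨⟨fun hvX => ?_, x₁, hx₁, hvN.2.2⟩, hvS⟩
            exact (Set.disjoint_left.mp hCS (hXC hvX)) hvS
        have hMle : {v ∈ N | sign (e1 v) = true ↔ v ∈ A}.ncard
            ≤ (C.ncard - X.ncard) + (nbhd G X ∩ S).ncard := by
          calc {v ∈ N | sign (e1 v) = true ↔ v ∈ A}.ncard
              ≤ ((C \ X) ∪ (nbhd G X ∩ S)).ncard :=
                Set.ncard_le_ncard hMsub (Set.toFinite _)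
            _ ≤ (C \ X).ncard + (nbhd G X ∩ S).ncard := Set.ncard_union_le _ _
            _ = (C.ncard - X.ncard) + (nbhd G X ∩ S).ncard := by
                rw [Set.ncard_diff hXC (Set.toFinite _)]
        omega
      · push_neg at h3
        obtain ⟨x₃, hx₃X, hx₃A⟩ := h3
        have hne23 : x₂ ≠ x₃ := fun h => hx₃A (h ▸ h2)
        have hne13 : x₁ ≠ x₃ := fun h => hx₃A (h ▸ h1)
        have hnb23 : ∀ v, v ≠ x₂ → v ≠ x₃ → (G.Adj x₂ v ↔ G.Adj x₃ v) :=
          fun v hv2 hv3 =>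
            ⟨fun h => hdirX x₂ hx₂ x₃ hx₃X v hv3 h, fun h => hdirX x₃ hx₃X x₂ hx₂ v hv2 h⟩
        have hsg23 : ∀ v, v ≠ x₂ → v ≠ x₃ → G.Adj x₂ v → sign s(x₂,v) = sign s(x₃,v) :=
          fun v hv2 hv3 h => hsgX x₂ hx₂ x₃ hx₃X v h hv3
        rw [← balCount_swap G sign A hnb23 hsg23]
        have h1' : x₁ ∈ Equiv.swap x₂ x₃ ⁻¹' A := by
          rw [Set.mem_preimage, Equiv.swap_apply_of_ne_of_ne hx12 hne13]
          exact h1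
        have h2' : x₂ ∉ Equiv.swap x₂ x₃ ⁻¹' A := by
          rw [Set.mem_preimage, Equiv.swap_apply_left]
          exact hx₃A
        rw [hsplit _, hTCopp _ h1' h2']
        have hIC' := hICle (Equiv.swap x₂ x₃ ⁻¹' A)
        omega
    · rw [hsplit A, hTCopp A h1 h2]
      have hIC' := hICle A
      omega
  have hmain : beta G sign = betaOn G sign U + N.ncard + 1 := by
    apply le_antisymm
    · refine csSup_le ⟨balCount G sign ∅, ∅, rfl⟩ ?_
      rintro n ⟨A, rfl⟩
      by_cases hA1 : x₁ ∈ A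
      · exact key A hA1
      · rw [← balCount_compl]
        exact key Aᶜ hA1
    · obtain ⟨B, hB⟩ := Nat.sSup_mem (s := {n | ∃ B : Set ↥U,
        n = balCount (G.induce U) (fun e => sign (Sym2.map Subtype.val e)) B})
        ⟨_, ∅, rfl⟩ hKbdd
      set A : Set V := (Subtype.val '' B) ∪ {x₁} with hAdef
      have h1 : x₁ ∈ A := Or.inr rfl
      have h2 : x₂ ∉ A := by
        intro h
        rcases h with h | h
        · obtain ⟨u, huB, hu⟩ := h
          exact ((hU' ↑u).mp u.2).2 hu
        · rw [Set.mem_singleton_iff] at h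
          exact hx12 h.symm
      have hrestB : {u : ↥U | ↑u ∈ A} = B := by
        ext u
        simp only [Set.mem_setOf_eq, hAdef, Set.mem_union, Set.mem_singleton_iff,
          Set.mem_image]
        constructor
        · rintro (⟨w, hwB, hw⟩ | h)
          · rwa [Subtype.val_injective hw] at hwB
          · exact absurd h ((hU' ↑u).mp u.2).1
        · intro hu
          exact Or.inl ⟨u, hu, rfl⟩
      have hcount : balCount G sign A = betaOn G sign U + N.ncard + 1 := by
        rw [hsplit A, hTCopp A h1 h2, hIC A, hrestB]
        have hKB : betaOn G sign U
            = balCount (G.induce U) (fun e => sign (Sym2.map Subtype.val e)) B := hB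
        rw [← hKB]
        omega
      calc betaOn G sign U + N.ncard + 1 = balCount G sign A := hcount.symm
        _ ≤ beta G sign := le_csSup hbddA ⟨A, rfl⟩
  have hccG : Nat.card G.ConnectedComponent = 1 := card_cc G hconn
  have hccU : Nat.card (G.induce U).ConnectedComponent = 1 := card_cc _ hrest
  have hnV : Nat.card V = Nat.card ↥U + 2 := by
    have h1 : U.ncard + Uᶜ.ncard = Nat.card V := Set.ncard_add_ncard_compl U
    have h2 : Uᶜ = ({x₁, x₂} : Set V) := by
      rw [hUdef, compl_compl]
    rw [Nat.card_coe_set_eq, ← h1, h2, Set.ncard_pair hx12]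
  have hx1U : x₁ ∉ U := by rw [hU']; tauto
  have hx2U : x₂ ∉ U := by rw [hU']; tauto
  have hmtouch : {e | e ∈ G.edgeSet ∧ ¬(∀ w ∈ e, w ∈ U)}.ncard = 2 * N.ncard + 1 := by
    have hset : {e | e ∈ G.edgeSet ∧ ¬(∀ w ∈ e, w ∈ U)}
        = ({s(x₁,x₂)} ∪ e1 '' N) ∪ e2 '' N := by
      ext e
      constructor
      · rintro ⟨he, hnu⟩
        rcases htouch e he hnu with he' | ⟨v, hv, he'⟩ | ⟨v, hv, he'⟩
        · exact Or.inl (Or.inl he')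
        · exact Or.inl (Or.inr ⟨v, hv, he'.symm⟩)
        · exact Or.inr ⟨v, hv, he'.symm⟩
      · rintro ((he | ⟨v, hvN, rfl⟩) | ⟨v, hvN, rfl⟩)
        · rw [Set.mem_singleton_iff] at he
          subst he
          exact ⟨hAdj12, fun hall => hx1U (hall x₁ (Sym2.mem_mk_left _ _))⟩
        · exact ⟨hvN.2.2, fun hall => hx1U (hall x₁ (Sym2.mem_mk_left _ _))⟩
        · exact ⟨((hNx2 v).mp hvN).2.2, fun hall => hx2U (hall x₂ (Sym2.mem_mk_left _ _))⟩
    rw [hset, Set.ncard_union_eq ?da (Set.toFinite _) (Set.toFinite _),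
      Set.ncard_union_eq ?db (Set.toFinite _) (Set.toFinite _),
      Set.ncard_image_of_injOn (hinj1 N subset_rfl),
      Set.ncard_image_of_injOn (hinj2 N subset_rfl), Set.ncard_singleton]
    · ring
    case da =>
      refine Set.disjoint_union_left.mpr ⟨?_, ?_⟩
      · rw [Set.disjoint_left]
        rintro e he ⟨v, hvN, rfl⟩
        rw [Set.mem_singleton_iff] at he
        exact hp2 v hvN he.symm
      · rw [Set.disjoint_left]
        rintro e ⟨v, hvN, rfl⟩ ⟨w, hwN, hweq⟩
        exact hd12 v hvN w hwN hweq.symm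
    case db =>
      rw [Set.disjoint_left]
      rintro e he ⟨v, hvN, rfl⟩
      rw [Set.mem_singleton_iff] at he
      exact hp1 v hvN he.symm
  have hmsplit : G.edgeSet.ncard
      = {e | e ∈ G.edgeSet ∧ (∀ w ∈ e, w ∈ U)}.ncard + (2 * N.ncard + 1) := by
    rw [← hmtouch, ← Set.ncard_union_eq ?dc (Set.toFinite _) (Set.toFinite _)]
    · congr 1
      ext e
      simp only [Set.mem_union, Set.mem_setOf_eq]
      by_cases h : ∀ w ∈ e, w ∈ U <;> tauto
    case dc =>
      rw [Set.disjoint_left]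
      rintro e ⟨-, h⟩ ⟨-, h'⟩
      exact h' h
  have hmU : (G.induce U).edgeSet.ncard
      = {e | e ∈ G.edgeSet ∧ (∀ w ∈ e, w ∈ U)}.ncard := by
    have h := induce_edge_card G U (fun _ => True)
    simpa using h
  have hdcard : {e | e ∈ G.edgeSet ∧ ∃ p q : V, e = s(p, q) ∧ p ∈ ({x₁, x₂} : Set V) ∧
      q ∉ ({x₁, x₂} : Set V)}.ncard = 2 * N.ncard := by
    have hdset : {e | e ∈ G.edgeSet ∧ ∃ p q : V, e = s(p, q) ∧ p ∈ ({x₁, x₂} : Set V) ∧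
        q ∉ ({x₁, x₂} : Set V)} = e1 '' N ∪ e2 '' N := by
      ext e
      constructor
      · rintro ⟨he, p, q, rfl, hp, hq⟩
        have hq1 : q ≠ x₁ := by intro h; exact hq (by simp [h])
        have hq2 : q ≠ x₂ := by intro h; exact hq (by simp [h])
        have hadj : G.Adj p q := he
        rcases (by simpa using hp : p = x₁ ∨ p = x₂) with rfl | rfl
        · exact Or.inl ⟨q, ⟨hq1, hq2, hadj⟩, rfl⟩
        · exact Or.inr ⟨q, (hNx2 q).mpr ⟨hq1, hq2, hadj⟩, rfl⟩
      · rintro (⟨v, hvN, rfl⟩ | ⟨v, hvN, rfl⟩)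
        · exact ⟨hvN.2.2, x₁, v, rfl, by simp, by simp [hvN.1, hvN.2.1]⟩
        · exact ⟨((hNx2 v).mp hvN).2.2, x₂, v, rfl, by simp, by simp [hvN.1, hvN.2.1]⟩
    rw [hdset, Set.ncard_union_eq ?de (Set.toFinite _) (Set.toFinite _),
      Set.ncard_image_of_injOn (hinj1 N subset_rfl),
      Set.ncard_image_of_injOn (hinj2 N subset_rfl)]
    · ring
    case de =>
      rw [Set.disjoint_left]
      rintro e ⟨v, hvN, rfl⟩ ⟨w, hwN, hweq⟩
      exact hd12 v hvN w hwN hweq.symm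
  have hptG : pt G = ((G.edgeSet.ncard : ℚ)) / 2 + ((Nat.card V : ℚ) - 1) / 4 := by
    unfold pt
    rw [hccG]
    norm_num
  have hptU : ptOn G U = (((G.induce U).edgeSet.ncard : ℚ)) / 2
      + ((Nat.card ↥U : ℚ) - 1) / 4 := by
    unfold ptOn pt
    rw [hccU]
    norm_num
  have hmQ : (G.edgeSet.ncard : ℚ) = ((G.induce U).edgeSet.ncard : ℚ) + 2 * N.ncard + 1 := by
    rw [hmsplit, hmU]
    push_cast
    ring
  have hnQ : (Nat.card V : ℚ) = (Nat.card ↥U : ℚ) + 2 := by exact_mod_cast hnV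
  constructor
  · rw [hptG, hptU, hmain, hmQ, hnQ]
    push_cast
    ring
  · rw [hmain, hdcard]
    push_cast
    ring
end
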